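/- arXiv:2501.04021 — 8 statements merged into one kernel-verified Lean document; each statement's English description precedes it below -/
import Mathlib

section
/- If θ_e is itself the minimum angle of triangle T (with maximum angle θ_M), then both edges adjacent to θ_e have length at least |e|, the area satisfies |T| ≥ sin(θ_M)|e|²/2, and consequently for every affine function w on T with e having endpoints x₁,x₂, |w(x₂) - w(x₁)| ≤ |e| |∇w| ≤ √(2/ sin θ_M) ‖∇w‖_{L²(T)}. -/
open EuclideanGeometry Real MeasureTheory
open scoped RealInnerProductSpace

noncomputable def triArea (A B C : EuclideanSpace ℝ (Fin 2)) : ℝ :=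
  (MeasureTheory.volume (convexHull ℝ ({A, B, C} : Set (EuclideanSpace ℝ (Fin 2))))).toReal

open Set
open scoped Pointwise

local notation "ℝ²" => EuclideanSpace ℝ (Fin 2)

/-! Computing the area as `|det(B - A, C - A)| / 2`, the area at any vertex is half the sine of
its angle times the two adjacent sides. The edge `x₁x₂` opposite the smallest angle is the
shortest side (the larger angle faces the larger side), so whichever vertex carries `θ_M`, both
of its sides are at least `|e|`, whence `|T| ≥ sin θ_M |e|² / 2`. The bound on `w` is
Cauchy–Schwarz, `|⟪∇w, x₂ - x₁⟫| ≤ |e| |∇w|`, followed by this area bound. -/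

lemma measurableSet_stdTriangle :
    MeasurableSet {q : ℝ × ℝ | q.1 ∈ Icc 0 1 ∧ q.2 ∈ Icc 0 (1 - q.1)} :=
  measurableSet_region_between_cc (f := fun _ => 0) measurable_const
    (measurable_const.sub measurable_id) measurableSet_Icc

lemma volume_stdTriangle :
    volume {q : ℝ × ℝ | q.1 ∈ Icc 0 1 ∧ q.2 ∈ Icc 0 (1 - q.1)} = ENNReal.ofReal (1 / 2) := by
  have hslice (x : ℝ) :
      volume (Prod.mk x ⁻¹' {q : ℝ × ℝ | q.1 ∈ Icc 0 1 ∧ q.2 ∈ Icc 0 (1 - q.1)}) =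
        (Icc 0 1).indicator (fun x => ENNReal.ofReal (1 - x)) x := by
    by_cases hx : x ∈ Icc (0 : ℝ) 1
    · simp only [preimage, mem_ofPred_eq, hx, true_and, ofPred_mem_eq, Real.volume_Icc, sub_zero,
        indicator_of_mem]
    · simp only [preimage, mem_ofPred_eq, hx, false_and, ofPred_false, measure_empty,
        not_false_eq_true, indicator_of_notMem]
  have hint : ∫ x in (0 : ℝ)..1, (1 - x) = 1 / 2 := by
    rw [intervalIntegral.integral_sub intervalIntegrable_const
      intervalIntegral.intervalIntegrable_id]
    norm_num [integral_id]
  rw [Measure.volume_eq_prod, Measure.prod_apply measurableSet_stdTriangle, lintegral_congr hslice,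
    lintegral_indicator measurableSet_Icc, ← ofReal_integral_eq_lintegral_ofReal,
    integral_Icc_eq_integral_Ioc, ← intervalIntegral.integral_of_le zero_le_one, hint]
  · exact (continuous_const.sub continuous_id).integrableOn_Icc
  · exact ae_restrict_of_forall_mem measurableSet_Icc fun x hx => sub_nonneg.2 hx.2

lemma volume_stdTriangle_euclidean :
    volume {x : ℝ² | x 0 ∈ Icc 0 1 ∧ x 1 ∈ Icc 0 (1 - x 0)} = ENNReal.ofReal (1 / 2) := by
  rw [← volume_stdTriangle]
  exact ((volume_preserving_finTwoArrow ℝ).comp (PiLp.volume_preserving_ofLp (Fin 2)))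
    |>.measure_preimage measurableSet_stdTriangle.nullMeasurableSet

lemma convexHull_zero_single_single :
    convexHull ℝ {0, EuclideanSpace.single 0 1, EuclideanSpace.single 1 1}
      = {x : ℝ² | x 0 ∈ Icc 0 1 ∧ x 1 ∈ Icc 0 (1 - x 0)} := by
  apply Subset.antisymm
  · refine convexHull_min ?_ ?_
    · rintro x (rfl | rfl | rfl) <;> norm_num
    · rintro x ⟨⟨hx0, -⟩, hx1, hx⟩ y ⟨⟨hy0, -⟩, hy1, hy⟩ a b ha hb hab
      simp only [mem_ofPred_eq, mem_Icc, PiLp.add_apply, PiLp.smul_apply, smul_eq_mul]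
      refine ⟨⟨by positivity, by nlinarith⟩, by positivity, by nlinarith⟩
  · rintro x ⟨⟨hx0, -⟩, hx1, hx⟩
    have hsum : x = ∑ i, ![1 - x 0 - x 1, x 0, x 1] i •
        ![0, EuclideanSpace.single 0 1, EuclideanSpace.single 1 1] i := by
      ext i; fin_cases i <;> simp [Fin.sum_univ_three]
    rw [hsum]
    refine (convex_convexHull ℝ _).sum_mem ?_ ?_ ?_
    · intro i _; fin_cases i <;> simp <;> linarith
    · simp [Fin.sum_univ_three]; ring
    · intro i _; fin_cases i <;> apply subset_convexHull <;> simp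

lemma sin_angle_mul_norm_mul_norm_eq_abs_det (u v : ℝ²) :
    sin (InnerProductGeometry.angle u v) * (‖u‖ * ‖v‖) = |u 0 * v 1 - u 1 * v 0| := by
  rw [InnerProductGeometry.sin_angle_mul_norm_mul_norm, ← Real.sqrt_sq_eq_abs]
  congr 1
  simp only [PiLp.inner_apply, RCLike.inner_apply, Fin.sum_univ_two, conj_trivial]
  ring

lemma volume_convexHull_triangle (A B C : ℝ²) :
    volume (convexHull ℝ {A, B, C}) =
      ENNReal.ofReal (|(B - A) 0 * (C - A) 1 - (B - A) 1 * (C - A) 0| / 2) := by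
  set u := B - A
  set v := C - A
  set f : ℝ² →ₗ[ℝ] ℝ² := Matrix.toLpLin 2 2 !![u 0, v 0; u 1, v 1]
  have hf0 : f (EuclideanSpace.single 0 1) = u := by
    ext i; fin_cases i <;> simp [f, Matrix.toLpLin_apply]
  have hf1 : f (EuclideanSpace.single 1 1) = v := by
    ext i; fin_cases i <;> simp [f, Matrix.toLpLin_apply]
  have hdet : LinearMap.det f = u 0 * v 1 - u 1 * v 0 := by
    simp only [f, Matrix.toLpLin_eq_toLin, LinearMap.det_toLin, Matrix.det_fin_two_of]
    ring
  have hABC : ({A, B, C} : Set ℝ²) =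
      A +ᵥ f '' {0, EuclideanSpace.single 0 1, EuclideanSpace.single 1 1} := by
    simp [image_insert_eq, hf0, hf1, vadd_set_insert, u, v]
  rw [hABC, convexHull_vadd, measure_vadd, ← LinearMap.image_convexHull,
    convexHull_zero_single_single, Measure.addHaar_image_linearMap, hdet,
    volume_stdTriangle_euclidean, ← ENNReal.ofReal_mul (abs_nonneg _), mul_one_div]

lemma triArea_eq_sin_angle_mul_dist_mul_dist (A B C : ℝ²) :
    triArea A B C = sin (∠ B A C) * (dist A B * dist A C) / 2 := by
  rw [triArea, volume_convexHull_triangle, ENNReal.toReal_ofReal (by positivity),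
    ← sin_angle_mul_norm_mul_norm_eq_abs_det, dist_comm A B, dist_comm A C, dist_eq_norm,
    dist_eq_norm]
  rfl

lemma triArea_swap (A B C : ℝ²) : triArea A B C = triArea B A C := by
  rw [triArea, triArea, insert_comm]

lemma triArea_rotate (A B C : ℝ²) : triArea A B C = triArea C A B := by
  rw [triArea, triArea, pair_comm B C, insert_comm A C]

lemma sin_angle_mul_sq_le_triArea {A B C : ℝ²} {d : ℝ} (hd : 0 ≤ d) (hB : d ≤ dist A B)
    (hC : d ≤ dist A C) : sin (∠ B A C) * d ^ 2 / 2 ≤ triArea A B C := by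
  have hsin : 0 ≤ sin (∠ B A C) :=
    sin_nonneg_of_nonneg_of_le_pi (angle_nonneg B A C) (angle_le_pi B A C)
  rw [triArea_eq_sin_angle_mul_dist_mul_dist, sq]
  gcongr

lemma le_sqrt_two_div_mul_sqrt {s d a : ℝ} (hs : 0 < s) (h : s * d ^ 2 / 2 ≤ a) :
    d ≤ √(2 / s) * √a :=
  calc d ≤ |d| := le_abs_self d
    _ ≤ √(2 / s * a) := Real.abs_le_sqrt (by rw [div_mul_eq_mul_div, le_div_iff₀ hs]; linarith)
    _ = √(2 / s) * √a := Real.sqrt_mul (by positivity) a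

lemma sin_mul_sq_le_triArea_of_le_dist {x₁ x₂ x₃ : ℝ²} {d : ℝ} (hd : 0 ≤ d)
    (h₁₂ : d ≤ dist x₁ x₂) (h₁₃ : d ≤ dist x₃ x₁) (h₂₃ : d ≤ dist x₃ x₂) :
    ∀ θ ∈ ({∠ x₂ x₁ x₃, ∠ x₁ x₂ x₃, ∠ x₁ x₃ x₂} : Set ℝ),
      sin θ * d ^ 2 / 2 ≤ triArea x₁ x₂ x₃ := by
  rintro θ (rfl | rfl | rfl)
  · exact sin_angle_mul_sq_le_triArea hd h₁₂ (h₁₃.trans_eq (dist_comm _ _))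
  · rw [triArea_swap]
    exact sin_angle_mul_sq_le_triArea hd (h₁₂.trans_eq (dist_comm _ _))
      (h₂₃.trans_eq (dist_comm _ _))
  · rw [triArea_rotate]
    exact sin_angle_mul_sq_le_triArea hd h₁₃ h₂₃

lemma sin_pos_of_mem_angles {x₁ x₂ x₃ : ℝ²} (hT : ¬Collinear ℝ {x₁, x₂, x₃}) :
    ∀ θ ∈ ({∠ x₂ x₁ x₃, ∠ x₁ x₂ x₃, ∠ x₁ x₃ x₂} : Set ℝ), 0 < sin θ := by
  rintro θ (rfl | rfl | rfl)
  · exact sin_pos_of_not_collinear (by rwa [insert_comm])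
  · exact sin_pos_of_not_collinear hT
  · exact sin_pos_of_not_collinear (by rwa [pair_comm])

lemma max_max_mem {α : Type*} [LinearOrder α] (a b c : α) :
    max a (max b c) ∈ ({a, b, c} : Set α) := by
  rcases max_choice a (max b c) with h | h <;> rw [h]
  · exact mem_insert _ _
  · rcases max_choice b c with h' | h' <;> simp [h']

lemma abs_affine_sub_le_dist_mul_norm {E : Type*} [NormedAddCommGroup E] [InnerProductSpace ℝ E]
    (g x y : E) (c : ℝ) : |(⟪g, y⟫ + c) - (⟪g, x⟫ + c)| ≤ dist x y * ‖g‖ := by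
  rw [add_sub_add_right_eq_sub, ← inner_sub_right, dist_comm, dist_eq_norm, mul_comm]
  exact abs_real_inner_le_norm g (y - x)

/-- if the angle `θe = ∠ x₁ x₃ x₂` opposite the edge `e = x₁x₂` is itself the
minimum angle of the triangle with maximum angle `θM`, then both edges adjacent to `θe`
have length at least `|e|`, the area satisfies `|T| ≥ sin(θM)|e|²/2`, and for every affine
`w` with gradient `g`,
`|w x₂ - w x₁| ≤ |e|·|∇w| ≤ √(2/sin θM)·‖∇w‖_{L²(T)}` where `‖∇w‖_{L²(T)} = |T|^{1/2}‖g‖`. -/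
theorem stmt1
    (x₁ x₂ x₃ : EuclideanSpace ℝ (Fin 2))
    (hnd : AffineIndependent ℝ ![x₁, x₂, x₃])
    (θM : ℝ)
    (hθM : θM = max (∠ x₂ x₁ x₃) (max (∠ x₁ x₂ x₃) (∠ x₁ x₃ x₂)))
    (hmin₁ : ∠ x₁ x₃ x₂ ≤ ∠ x₂ x₁ x₃)
    (hmin₂ : ∠ x₁ x₃ x₂ ≤ ∠ x₁ x₂ x₃)
    (g : EuclideanSpace ℝ (Fin 2)) (c : ℝ)
    (w : EuclideanSpace ℝ (Fin 2) → ℝ)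
    (hw : ∀ x, w x = ⟪g, x⟫ + c) :
    dist x₁ x₂ ≤ dist x₃ x₁ ∧
    dist x₁ x₂ ≤ dist x₃ x₂ ∧
    Real.sin θM * dist x₁ x₂ ^ 2 / 2 ≤ triArea x₁ x₂ x₃ ∧
    |w x₂ - w x₁| ≤ dist x₁ x₂ * ‖g‖ ∧
    dist x₁ x₂ * ‖g‖ ≤ Real.sqrt (2 / Real.sin θM) * (Real.sqrt (triArea x₁ x₂ x₃) * ‖g‖) := by
  have hT : ¬Collinear ℝ {x₁, x₂, x₃} := affineIndependent_iff_not_collinear_set.1 hnd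
  have h₁₃ : dist x₁ x₂ ≤ dist x₃ x₁ := by
    rw [dist_comm x₃]; exact (angle_le_iff_dist_le hT).1 hmin₂
  have h₂₃ : dist x₁ x₂ ≤ dist x₃ x₂ := by
    rw [dist_comm x₁, dist_comm x₃]
    exact (angle_le_iff_dist_le (by rwa [insert_comm])).1 (by rwa [angle_comm x₂])
  have hθM_mem := hθM ▸ max_max_mem (∠ x₂ x₁ x₃) (∠ x₁ x₂ x₃) (∠ x₁ x₃ x₂)
  have harea : sin θM * dist x₁ x₂ ^ 2 / 2 ≤ triArea x₁ x₂ x₃ :=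
    sin_mul_sq_le_triArea_of_le_dist dist_nonneg le_rfl h₁₃ h₂₃ θM hθM_mem
  have hgrad : |w x₂ - w x₁| ≤ dist x₁ x₂ * ‖g‖ := by
    rw [hw, hw]; exact abs_affine_sub_le_dist_mul_norm g x₁ x₂ c
  refine ⟨h₁₃, h₂₃, harea, hgrad, ?_⟩
  rw [← mul_assoc]
  exact mul_le_mul_of_nonneg_right
    (le_sqrt_two_div_mul_sqrt (sin_pos_of_mem_angles hT θM hθM_mem) harea) (norm_nonneg g)
end

section
/- (Trace inequality on anisotropic elements with inscribed ball) Let K ⊂ ℝ³ be a polyhedron with diameter h_K containing a ball of radius ≥ λ h_K for some λ ∈ (0,1), and with |F_K| faces. Then for every affine function v on K, ‖v‖_{L²(∂K)} ≤ 16 λ^{-3} √(|F_K|/3) h_K^{-1/2} ‖v‖_{L²(K)}. -/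
/-!
On `∂K` the affine function `v = ⟪g, ·⟫ + c` is bounded by `‖g‖ h + |v z|`, and each face is a
planar set of diameter at most `h`, hence of area at most `8 h²`: Mathlib's `μH[2]` agrees with
Lebesgue measure for the sup norm, and a Euclidean disc of radius `h` is the image of a sup-norm
square of side `2 h` under a `√2`-Lipschitz map. Thus `∫_{∂K} v² ≤ 8 NF h² (‖g‖ h + |v z|)²`.

Conversely, the inscribed ball contains the cube centred at `z` of half-side `s = 4/7 λ h`
(as `4/7 < 1/√3`) having one edge parallel to `g`. By Fubini, `∫ v²` over this cube is
`(2s)² (2s (v z)² + 2/3 ‖g‖² s³)`, which is at least `3/32 λ⁶ h³ (‖g‖ h + |v z|)²` for `λ ≤ 1`.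
Comparing the two bounds gives the constant `16 λ⁻³ √(NF/3) h^{-1/2}`.
-/

open MeasureTheory Metric Module Set
open scoped RealInnerProductSpace ENNReal NNReal

theorem EuclideanSpace.norm_toLp_le {ι : Type*} [Fintype ι] (u : ι → ℝ) :
    ‖WithLp.toLp 2 u‖ ≤ √(Fintype.card ι) * ‖u‖ := by
  rw [EuclideanSpace.norm_eq, ← Real.sqrt_sq (norm_nonneg u), ← Real.sqrt_mul (by positivity)]
  refine Real.sqrt_le_sqrt ?_
  calc ∑ i, ‖u i‖ ^ 2 ≤ ∑ _i : ι, ‖u‖ ^ 2 := by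
        gcongr with i; exact norm_le_pi_norm u i
    _ = Fintype.card ι * ‖u‖ ^ 2 := by simp

theorem EuclideanSpace.hausdorffMeasure_closedBall_le {ι : Type*} [Fintype ι]
    (x : EuclideanSpace ℝ ι) {r : ℝ} (hr : 0 ≤ r) :
    μH[Fintype.card ι] (closedBall x r) ≤
      ENNReal.ofReal ((√(Fintype.card ι) * (2 * r)) ^ Fintype.card ι) := by
  have hK : LipschitzWith (NNReal.sqrt (Fintype.card ι))
      (WithLp.toLp 2 : (ι → ℝ) → EuclideanSpace ℝ ι) :=
    LipschitzWith.of_dist_le_mul fun u w => by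
      simpa [dist_eq_norm] using EuclideanSpace.norm_toLp_le (u - w)
  have hsub : closedBall x r ⊆ WithLp.toLp 2 '' closedBall (WithLp.ofLp x) r := fun y hy =>
    ⟨WithLp.ofLp y, ((PiLp.lipschitzWith_ofLp 2 _).dist_le_mul y x).trans (by simpa using hy), rfl⟩
  calc μH[Fintype.card ι] (closedBall x r)
      ≤ (NNReal.sqrt (Fintype.card ι) : ℝ≥0∞) ^ (Fintype.card ι : ℝ) *
          μH[Fintype.card ι] (closedBall (WithLp.ofLp x) r) :=
        (measure_mono hsub).trans (hK.hausdorffMeasure_image_le (by positivity) _)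
    _ = ENNReal.ofReal ((√(Fintype.card ι) * (2 * r)) ^ Fintype.card ι) := by
        rw [hausdorffMeasure_pi_real, Real.volume_pi_closedBall _ hr, ENNReal.rpow_natCast,
          mul_pow (√_), ENNReal.ofReal_mul (by positivity), ENNReal.ofReal_pow (Real.sqrt_nonneg _),
          ← NNReal.coe_natCast, ← Real.coe_sqrt, ENNReal.ofReal_coe_nnreal]

theorem integral_Icc_sq_add_mul (a γ : ℝ) {s : ℝ} (hs : 0 ≤ s) :
    ∫ t in Icc (-s) s, (a + γ * t) ^ 2 = 2 * s * a ^ 2 + 2 / 3 * γ ^ 2 * s ^ 3 := by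
  have hderiv (t : ℝ) : HasDerivAt (fun t => a ^ 2 * t + a * γ * t ^ 2 + γ ^ 2 * t ^ 3 / 3)
      ((a + γ * t) ^ 2) t := by
    refine ((((hasDerivAt_id t).const_mul (a ^ 2)).add
      (((hasDerivAt_id t).pow 2).const_mul (a * γ))).add
      ((((hasDerivAt_id t).pow 3).const_mul (γ ^ 2)).div_const 3)).congr_deriv ?_
    simp only [id, Nat.cast_ofNat]; ring
  rw [integral_Icc_eq_integral_Ioc, ← intervalIntegral.integral_of_le (by linarith),
    intervalIntegral.integral_eq_sub_of_hasDerivAt (fun t _ => hderiv t)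
      (Continuous.intervalIntegrable (by fun_prop) _ _)]
  ring

theorem setIntegral_closedBall_pi_comp_eval_zero {n : ℕ} (F : ℝ → ℝ) {s : ℝ} (hs : 0 ≤ s) :
    ∫ u in closedBall (0 : Fin (n + 1) → ℝ) s, F (u 0) = (2 * s) ^ n * ∫ t in Icc (-s) s, F t := by
  have hprod := integral_fintype_prod_eq_prod (𝕜 := ℝ)
    (μ := fun _ : Fin (n + 1) => volume.restrict (Icc (-s) s))
    (fun i => if i = 0 then F else fun _ => 1)
  simp only [Fin.prod_univ_succ, ↓reduceIte, Fin.succ_ne_zero, Finset.prod_const_one, mul_one,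
    integral_const, measureReal_restrict_apply, MeasurableSet.univ, univ_inter, smul_eq_mul,
    Finset.prod_const, Finset.card_univ, Fintype.card_fin,
    Real.volume_real_Icc_of_le (neg_le_self hs)] at hprod
  rw [closedBall_pi _ hs, volume_pi, Measure.restrict_pi_pi]
  simp only [Pi.zero_apply, Real.closedBall_eq_Icc, zero_sub, zero_add]
  rw [hprod, mul_comm, sub_neg_eq_add, ← two_mul]

section InnerProductSpace

variable {E : Type*} [NormedAddCommGroup E] [InnerProductSpace ℝ E]

theorem hausdorffMeasure_le_of_subset_hyperplane [MeasurableSpace E] [BorelSpace E] {n : ℕ}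
    (hE : finrank ℝ E = n + 1) {ν : E} (hν : ν ≠ 0) {d r : ℝ} (hr : 0 ≤ r) {S : Set E}
    (hS : S ⊆ {x | ⟪ν, x⟫ = d}) (hSr : ∀ x ∈ S, ∀ y ∈ S, dist x y ≤ r) :
    μH[n] S ≤ ENNReal.ofReal ((√n * (2 * r)) ^ n) := by
  rcases S.eq_empty_or_nonempty with rfl | ⟨p, hp⟩
  · simp
  have : Fact (finrank ℝ E = n + 1) := ⟨hE⟩
  have : FiniteDimensional ℝ E := .of_fact_finrank_eq_succ n
  let b := (stdOrthonormalBasis ℝ (ℝ ∙ ν)ᗮ).reindex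
    (finCongr (Submodule.finrank_orthogonal_span_singleton (n := n) hν))
  let L : EuclideanSpace ℝ (Fin n) → E := fun y => (b.repr.symm y : E) + p
  have hL : Isometry L := (IsometryEquiv.addRight p).isometry.comp
    ((ℝ ∙ ν)ᗮ.subtypeₗᵢ.isometry.comp b.repr.symm.isometry)
  have hsub : S ⊆ L '' closedBall 0 r := by
    intro x hx
    have hmem : x - p ∈ (ℝ ∙ ν)ᗮ := by
      rw [Submodule.mem_orthogonal_singleton_iff_inner_right, inner_sub_right, hS hx, hS hp,
        sub_self]
    refine ⟨b.repr ⟨x - p, hmem⟩, ?_, by simp [L]⟩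
    simpa [← dist_eq_norm] using hSr x hx p hp
  calc μH[n] S ≤ μH[n] (closedBall (0 : EuclideanSpace ℝ (Fin n)) r) := by
        rw [← hL.hausdorffMeasure_image (Or.inl n.cast_nonneg)]; exact measure_mono hsub
    _ ≤ ENNReal.ofReal ((√n * (2 * r)) ^ n) := by
        simpa using EuclideanSpace.hausdorffMeasure_closedBall_le (0 : EuclideanSpace ℝ (Fin n)) hr

theorem hausdorffMeasure_frontier_le [MeasurableSpace E] [BorelSpace E] {n : ℕ}
    (hE : finrank ℝ E = n + 1) {K : Set E} (hK : IsCompact K) {ι : Type*} [Fintype ι]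
    (F : ι → Set E) (hF : ∀ j, ∃ (ν : E) (d : ℝ), ν ≠ 0 ∧ F j ⊆ {x | ⟪ν, x⟫ = d})
    (hKF : frontier K = ⋃ j, F j) :
    μH[n] (frontier K) ≤ ENNReal.ofReal (Fintype.card ι * (√n * (2 * diam K)) ^ n) := by
  have hFK (j : ι) : F j ⊆ K := hKF ▸ subset_iUnion F j |>.trans hK.isClosed.frontier_subset
  calc μH[n] (frontier K) ≤ ∑ j, μH[n] (F j) := hKF ▸ measure_iUnion_fintype_le _ F
    _ ≤ ∑ _j : ι, ENNReal.ofReal ((√n * (2 * diam K)) ^ n) := by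
        gcongr with j
        obtain ⟨ν, d, hν, hFj⟩ := hF j
        exact hausdorffMeasure_le_of_subset_hyperplane hE hν diam_nonneg hFj fun x hx y hy =>
          dist_le_diam_of_mem hK.isBounded (hFK j hx) (hFK j hy)
    _ = ENNReal.ofReal (Fintype.card ι * (√n * (2 * diam K)) ^ n) := by
        rw [ENNReal.ofReal_mul (by positivity), ENNReal.ofReal_natCast]; simp

theorem abs_inner_add_le (g x z : E) (c : ℝ) :
    |⟪g, x⟫ + c| ≤ ‖g‖ * dist x z + |⟪g, z⟫ + c| := by
  calc |⟪g, x⟫ + c| = |⟪g, x - z⟫ + (⟪g, z⟫ + c)| := by rw [inner_sub_right]; ring_nf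
    _ ≤ |⟪g, x - z⟫| + |⟪g, z⟫ + c| := abs_add_le _ _
    _ ≤ ‖g‖ * dist x z + |⟪g, z⟫ + c| := by
        rw [dist_eq_norm]; gcongr; exact abs_real_inner_le_norm _ _

theorem setIntegral_frontier_sq_inner_add_le [MeasurableSpace E] [BorelSpace E] {n : ℕ}
    (hE : finrank ℝ E = n + 1) {K : Set E} (hK : IsCompact K) {ι : Type*} [Fintype ι]
    (F : ι → Set E) (hF : ∀ j, ∃ (ν : E) (d : ℝ), ν ≠ 0 ∧ F j ⊆ {x | ⟪ν, x⟫ = d})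
    (hKF : frontier K = ⋃ j, F j) (g : E) (c : ℝ) {z : E} (hz : z ∈ K) :
    ∫ x in frontier K, (⟪g, x⟫ + c) ^ 2 ∂μH[n] ≤
      Fintype.card ι * (√n * (2 * diam K)) ^ n * (‖g‖ * diam K + |⟪g, z⟫ + c|) ^ 2 := by
  have hμ := hausdorffMeasure_frontier_le hE hK F hF hKF
  have hbound (x) (hx : x ∈ frontier K) :
      ‖(⟪g, x⟫ + c) ^ 2‖ ≤ (‖g‖ * diam K + |⟪g, z⟫ + c|) ^ 2 := by
    rw [norm_pow, Real.norm_eq_abs]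
    gcongr
    refine (abs_inner_add_le g x z c).trans ?_
    gcongr
    exact dist_le_diam_of_mem hK.isBounded (hK.isClosed.frontier_subset hx) hz
  calc ∫ x in frontier K, (⟪g, x⟫ + c) ^ 2 ∂μH[n]
      ≤ (‖g‖ * diam K + |⟪g, z⟫ + c|) ^ 2 * (μH[n] (frontier K)).toReal :=
        (le_abs_self _).trans
          (norm_setIntegral_le_of_norm_le_const (hμ.trans_lt ENNReal.ofReal_lt_top) hbound)
    _ ≤ _ := by
        rw [mul_comm]
        gcongr
        exact ENNReal.toReal_le_of_le_ofReal (by positivity) hμ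

theorem exists_orthonormalBasis_eq_norm_smul {n : ℕ} (hE : finrank ℝ E = n + 1) (g : E) :
    ∃ b : OrthonormalBasis (Fin (n + 1)) ℝ E, g = ‖g‖ • b 0 := by
  have : Fact (finrank ℝ E = n + 1) := ⟨hE⟩
  have : FiniteDimensional ℝ E := .of_fact_finrank_eq_succ n
  rcases eq_or_ne g 0 with rfl | hg
  · exact ⟨(stdOrthonormalBasis ℝ E).reindex (finCongr hE), by simp⟩
  have hv : Orthonormal ℝ (({0} : Set (Fin (n + 1))).domRestrict fun _ => ‖g‖⁻¹ • g) := by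
    rw [orthonormal_iff_ite]
    intro i j
    simp [Subsingleton.elim i j, norm_smul, hg]
  obtain ⟨b, hb⟩ := hv.exists_orthonormalBasis_extension_of_card_eq (by simpa using hE)
  refine ⟨b, ?_⟩
  rw [hb 0 rfl, smul_smul, mul_inv_cancel₀ (norm_ne_zero_iff.2 hg), one_smul]

theorem le_setIntegral_sq_inner_add_of_closedBall_subset [FiniteDimensional ℝ E]
    [MeasurableSpace E] [BorelSpace E] {n : ℕ} (hE : finrank ℝ E = n + 1) {K : Set E}
    (hK : IsCompact K) {z : E} {s : ℝ} (hs : 0 ≤ s) (hzK : closedBall z (√(n + 1) * s) ⊆ K)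
    (g : E) (c : ℝ) :
    (2 * s) ^ n * (2 * s * (⟪g, z⟫ + c) ^ 2 + 2 / 3 * ‖g‖ ^ 2 * s ^ 3) ≤
      ∫ x in K, (⟪g, x⟫ + c) ^ 2 := by
  obtain ⟨b, hb⟩ := exists_orthonormalBasis_eq_norm_smul hE g
  let φ : (Fin (n + 1) → ℝ) ≃ᵐ E := (MeasurableEquiv.toLp 2 _).trans
    (b.repr.symm.toHomeomorph.toMeasurableEquiv.trans (Homeomorph.addLeft z).toMeasurableEquiv)
  have hφ : MeasurePreserving φ :=
    ((measurePreserving_add_left volume z).comp b.measurePreserving_repr_symm).comp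
      (PiLp.volume_preserving_toLp _)
  have hφg (u : Fin (n + 1) → ℝ) : ⟪g, φ u⟫ + c = (⟪g, z⟫ + c) + ‖g‖ * u 0 := by
    have : ⟪g, b.repr.symm (WithLp.toLp 2 u)⟫ = ‖g‖ * u 0 := by
      conv_lhs => rw [hb]
      simp [inner_smul_left, ← OrthonormalBasis.repr_apply_apply]
    rw [show φ u = z + b.repr.symm (WithLp.toLp 2 u) from rfl, inner_add_right, this]
    ring
  have hsub : φ '' closedBall 0 s ⊆ closedBall z (√(n + 1) * s) := by
    rintro _ ⟨u, hu, rfl⟩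
    rw [mem_closedBall_zero_iff] at hu
    simpa [φ, dist_eq_norm] using (EuclideanSpace.norm_toLp_le u).trans (by gcongr; simp)
  calc (2 * s) ^ n * (2 * s * (⟪g, z⟫ + c) ^ 2 + 2 / 3 * ‖g‖ ^ 2 * s ^ 3)
      = ∫ x in φ '' closedBall 0 s, (⟪g, x⟫ + c) ^ 2 := by
        rw [hφ.setIntegral_image_emb φ.measurableEmbedding]
        simp only [hφg]
        rw [setIntegral_closedBall_pi_comp_eval_zero (fun t => (⟪g, z⟫ + c + ‖g‖ * t) ^ 2) hs,
          integral_Icc_sq_add_mul _ _ hs]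
    _ ≤ ∫ x in K, (⟪g, x⟫ + c) ^ 2 :=
        setIntegral_mono_set ((Continuous.continuousOn (by fun_prop)).integrableOn_compact hK)
          (.of_forall fun _ => sq_nonneg _) (hsub.trans hzK).eventuallyLE

end InnerProductSpace

theorem boundary_estimate_le_volume_estimate {lam h s a γ : ℝ} (hlam0 : 0 < lam)
    (hlam1 : lam ≤ 1) (hh : 0 < h) (hs : s = 4 / 7 * lam * h) :
    (√2 * (2 * h)) ^ 2 * (γ * h + |a|) ^ 2 ≤
      256 / (3 * lam ^ 6 * h) * ((2 * s) ^ 2 * (2 * s * a ^ 2 + 2 / 3 * γ ^ 2 * s ^ 3)) := by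
  subst hs
  have hrhs : 256 / (3 * lam ^ 6 * h) * ((2 * (4 / 7 * lam * h)) ^ 2 *
      (2 * (4 / 7 * lam * h) * a ^ 2 + 2 / 3 * γ ^ 2 * (4 / 7 * lam * h) ^ 3)) =
      h ^ 2 * (131072 / 1029 * (|a| ^ 2 / lam ^ 3) + 2097152 / 151263 * ((γ * h) ^ 2 / lam)) := by
    rw [sq_abs]; field_simp; ring
  have hlhs : (√2 * (2 * h)) ^ 2 * (γ * h + |a|) ^ 2 = h ^ 2 * (8 * (γ * h + |a|) ^ 2) := by
    rw [mul_pow, Real.sq_sqrt zero_le_two]; ring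
  rw [hrhs, hlhs]
  gcongr h ^ 2 * ?_
  have h1 : |a| ^ 2 ≤ |a| ^ 2 / lam ^ 3 :=
    le_div_self (sq_nonneg _) (by positivity) (pow_le_one₀ hlam0.le hlam1)
  have h2 : (γ * h) ^ 2 ≤ (γ * h) ^ 2 / lam := le_div_self (sq_nonneg _) hlam0 hlam1
  -- `8 (x + y)² ≤ 68/5 x² + 136/7 y²`, and both coefficients are below the ones above
  nlinarith [sq_nonneg (7 * (γ * h) - 10 * |a|)]

theorem stmt7_general
    (K : Set (EuclideanSpace ℝ (Fin 3)))
    (hKc : IsCompact K)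
    (NF : ℕ) (F : Fin NF → Set (EuclideanSpace ℝ (Fin 3)))
    (hplanar : ∀ j, ∃ (n : EuclideanSpace ℝ (Fin 3)) (d : ℝ), n ≠ 0 ∧
      F j ⊆ {x | ⟪n, x⟫ = d})
    (hbd : frontier K = ⋃ j, F j)
    (lam : ℝ) (hlam0 : 0 < lam) (hlam1 : lam < 1)
    (z : EuclideanSpace ℝ (Fin 3))
    (hball : Metric.closedBall z (lam * Metric.diam K) ⊆ K)
    (g : EuclideanSpace ℝ (Fin 3)) (c : ℝ)
    (v : EuclideanSpace ℝ (Fin 3) → ℝ)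
    (hv : ∀ x, v x = ⟪g, x⟫ + c) :
    Real.sqrt (∫ x in frontier K, (v x) ^ 2 ∂(μH[2]))
      ≤ 16 / lam ^ 3 * Real.sqrt ((NF : ℝ) / 3) * (Real.sqrt (Metric.diam K))⁻¹ *
        Real.sqrt (∫ x in K, (v x) ^ 2) := by
  obtain rfl : v = fun x => ⟪g, x⟫ + c := funext hv
  have hz : z ∈ K := hball (mem_closedBall_self (mul_nonneg hlam0.le diam_nonneg))
  have hbdry := setIntegral_frontier_sq_inner_add_le finrank_euclideanSpace_fin hKc F hplanar hbd
    g c hz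
  simp only [Fintype.card_fin, Nat.cast_ofNat] at hbdry
  have hh : 0 ≤ diam K := diam_nonneg
  generalize diam K = h at *
  rcases hh.eq_or_lt with rfl | hpos
  · rw [Real.sqrt_eq_zero'.2 (by simpa using hbdry)]
    positivity
  have hsK : closedBall z (√((2 : ℕ) + 1) * (4 / 7 * lam * h)) ⊆ K := by
    have h3 : √((2 : ℕ) + 1) ≤ 7 / 4 := Real.sqrt_le_iff.2 (by norm_num)
    refine (closedBall_subset_closedBall ?_).trans hball
    nlinarith [mul_nonneg hlam0.le hpos.le]
  have hvol := le_setIntegral_sq_inner_add_of_closedBall_subset finrank_euclideanSpace_fin hKc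
    (by positivity) hsK g c
  have hconst : (16 / lam ^ 3 * √(NF / 3) * (√h)⁻¹) ^ 2 = NF * (256 / (3 * lam ^ 6 * h)) := by
    rw [mul_pow, mul_pow, inv_pow, Real.sq_sqrt (by positivity), Real.sq_sqrt hpos.le]
    field_simp
    ring
  have key : ∫ x in frontier K, (⟪g, x⟫ + c) ^ 2 ∂μH[2] ≤
      (16 / lam ^ 3 * √(NF / 3) * (√h)⁻¹) ^ 2 * ∫ x in K, (⟪g, x⟫ + c) ^ 2 := by
    refine hbdry.trans ?_
    rw [hconst, mul_assoc, mul_assoc]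
    gcongr (NF : ℝ) * ?_
    exact (boundary_estimate_le_volume_estimate hlam0 hlam1.le hpos rfl).trans (by gcongr)
  calc _ ≤ √((16 / lam ^ 3 * √(NF / 3) * (√h)⁻¹) ^ 2 * ∫ x in K, (⟪g, x⟫ + c) ^ 2) :=
        Real.sqrt_le_sqrt key
    _ = _ := by rw [Real.sqrt_mul (sq_nonneg _), Real.sqrt_sq (by positivity)]

/-- trace inequality on anisotropic elements with inscribed ball:
let `K ⊆ ℝ³` be a polyhedron of diameter `h_K` whose boundary consists of `NF`
planar faces, containing a ball of radius `≥ λ h_K` with `λ ∈ (0,1)`.  Then for every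
affine `v` (gradient `g`),
`‖v‖_{L²(∂K)} ≤ 16 λ⁻³ √(NF/3) h_K^{-1/2} ‖v‖_{L²(K)}`,
where the boundary norm uses the 2-dimensional Hausdorff (surface) measure. -/
theorem stmt7
    (K : Set (EuclideanSpace ℝ (Fin 3)))
    (hKc : IsCompact K) (hKne : (interior K).Nonempty)
    (NF : ℕ) (F : Fin NF → Set (EuclideanSpace ℝ (Fin 3)))
    (hplanar : ∀ j, ∃ (n : EuclideanSpace ℝ (Fin 3)) (d : ℝ), n ≠ 0 ∧
      F j ⊆ {x | ⟪n, x⟫ = d})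
    (hbd : frontier K = ⋃ j, F j)
    (lam : ℝ) (hlam0 : 0 < lam) (hlam1 : lam < 1)
    (z : EuclideanSpace ℝ (Fin 3))
    (hball : Metric.closedBall z (lam * Metric.diam K) ⊆ K)
    (g : EuclideanSpace ℝ (Fin 3)) (c : ℝ)
    (v : EuclideanSpace ℝ (Fin 3) → ℝ)
    (hv : ∀ x, v x = ⟪g, x⟫ + c) :
    Real.sqrt (∫ x in frontier K, (v x) ^ 2 ∂(μH[2]))
      ≤ 16 / lam ^ 3 * Real.sqrt ((NF : ℝ) / 3) * (Real.sqrt (Metric.diam K))⁻¹ *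
        Real.sqrt (∫ x in K, (v x) ^ 2) :=
  stmt7_general K hKc NF F hplanar hbd lam hlam0 hlam1 z hball g c v hv
end

section
/- (Norm comparison of affine functions on concentric balls) Let B ⊂ ℝ³ be a ball of radius ρ and B̃ the concentric ball of radius R ≥ ρ, and set λ = ρ/R. Then for every affine function v, ‖v‖²_{L²(B̃)} ≤ ((1 + √(1−λ²))/λ)⁵ ‖v‖²_{L²(B)}. -/
open MeasureTheory Metric Module
open scoped RealInnerProductSpace

/-! Translating the centre to the origin, `v x = ⟪g, x⟫ + a`. Over a centred ball the cross term
`2 a ⟪g, x⟫` integrates to zero by oddness, and scaling to the unit ball of `ℝⁿ` gives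
`‖v‖²_{L²(B(0, r))} = r ^ (n + 2) A + r ^ n W` with `A, W ≥ 0` independent of `r`. Hence the ratio
of the squared norms on the balls of radii `R` and `ρ` is at most `(R / ρ) ^ (n + 2)`, and
`R / ρ = 1 / λ ≤ (1 + √(1 - λ²)) / λ`. -/

section Haar

variable {E : Type*} [NormedAddCommGroup E] [MeasurableSpace E] [BorelSpace E]
  {F : Type*} [NormedAddCommGroup F] [NormedSpace ℝ F] (μ : Measure E)

theorem setIntegral_eq_zero_of_odd [μ.IsNegInvariant] {s : Set E} (hs : -s = s) {f : E → F}
    (hf : ∀ x, f (-x) = -f x) : ∫ x in s, f x ∂μ = 0 := by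
  have h := (Measure.measurePreserving_neg μ).setIntegral_preimage_emb
    (Homeomorph.neg E).measurableEmbedding f s
  change ∫ x in -s, f (-x) ∂μ = _ at h
  rw [hs] at h
  simp only [hf, integral_neg] at h
  rw [neg_eq_iff_add_eq_zero, ← two_smul ℝ, smul_eq_zero] at h
  exact h.resolve_left two_ne_zero

theorem setIntegral_closedBall_eq_zero_add [μ.IsAddRightInvariant] (f : E → F) (z : E) (r : ℝ) :
    ∫ x in closedBall z r, f x ∂μ = ∫ y in closedBall 0 r, f (y + z) ∂μ := by
  rw [← (measurePreserving_add_right μ z).setIntegral_preimage_emb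
    (measurableEmbedding_addRight z) f, preimage_add_right_closedBall, sub_self]

theorem setIntegral_closedBall_zero_eq_pow_smul [NormedSpace ℝ E] [FiniteDimensional ℝ E]
    [μ.IsAddHaarMeasure] (f : E → F) {r : ℝ} (hr : 0 < r) :
    ∫ x in closedBall 0 r, f x ∂μ = r ^ finrank ℝ E • ∫ y in closedBall 0 1, f (r • y) ∂μ := by
  rw [Measure.setIntegral_comp_smul_of_pos μ f _ hr, _root_.smul_closedBall _ _ zero_le_one,
    smul_zero, Real.norm_of_nonneg hr.le, mul_one, smul_smul, mul_inv_cancel₀ (by positivity),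
    one_smul]

end Haar

section InnerProductSpace

variable {E : Type*} [NormedAddCommGroup E] [InnerProductSpace ℝ E] [FiniteDimensional ℝ E]
  [MeasurableSpace E] [BorelSpace E] (μ : Measure E) [μ.IsAddHaarMeasure]

theorem setIntegral_closedBall_zero_inner (g : E) (r : ℝ) :
    ∫ x in closedBall 0 r, ⟪g, x⟫ ∂μ = 0 :=
  setIntegral_eq_zero_of_odd μ (by simp) fun x => inner_neg_right g x

theorem setIntegral_closedBall_zero_sq_inner_add_const (g : E) (a : ℝ) {r : ℝ} (hr : 0 < r) :
    ∫ x in closedBall 0 r, (⟪g, x⟫ + a) ^ 2 ∂μ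
      = r ^ (finrank ℝ E + 2) * ∫ y in closedBall 0 1, ⟪g, y⟫ ^ 2 ∂μ
        + r ^ finrank ℝ E * (μ.real (closedBall 0 1) * a ^ 2) := by
  have hint : ∀ f : E → ℝ, Continuous f → IntegrableOn f (closedBall 0 1) μ := fun f hf =>
    hf.continuousOn.integrableOn_compact (isCompact_closedBall 0 1)
  have hexpand : ∀ y : E,
      (⟪g, r • y⟫ + a) ^ 2 = r ^ 2 * ⟪g, y⟫ ^ 2 + (2 * r * a * ⟪g, y⟫ + a ^ 2) := fun y => by
    rw [real_inner_smul_right]; ring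
  rw [setIntegral_closedBall_zero_eq_pow_smul μ _ hr]
  simp only [hexpand]
  rw [integral_add (hint _ (by fun_prop)) (hint _ (by fun_prop)),
    integral_add (hint _ (by fun_prop)) (hint _ (by fun_prop)), integral_const_mul,
    integral_const_mul, setIntegral_closedBall_zero_inner, setIntegral_const, smul_eq_mul,
    smul_eq_mul]
  ring

theorem setIntegral_closedBall_sq_inner_add_const_le (z g : E) (c : ℝ) {ρ R : ℝ} (hρ : 0 < ρ)
    (hρR : ρ ≤ R) :
    ∫ x in closedBall z R, (⟪g, x⟫ + c) ^ 2 ∂μ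
      ≤ (R / ρ) ^ (finrank ℝ E + 2) * ∫ x in closedBall z ρ, (⟪g, x⟫ + c) ^ 2 ∂μ := by
  have hR : 0 < R := hρ.trans_le hρR
  have htranslate : ∀ r, ∫ x in closedBall z r, (⟪g, x⟫ + c) ^ 2 ∂μ
      = ∫ y in closedBall 0 r, (⟪g, y⟫ + (⟪g, z⟫ + c)) ^ 2 ∂μ := fun r => by
    simp only [setIntegral_closedBall_eq_zero_add μ _ z, inner_add_right, add_assoc]
  set n := finrank ℝ E
  set A := ∫ y in closedBall 0 1, ⟪g, y⟫ ^ 2 ∂μ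
  set W := μ.real (closedBall 0 1) * (⟪g, z⟫ + c) ^ 2
  have hW : 0 ≤ W := by positivity
  have hscale : 1 ≤ (R / ρ) ^ 2 := one_le_pow₀ ((one_le_div hρ).mpr hρR)
  have hRq : R = R / ρ * ρ := (div_mul_cancel₀ R hρ.ne').symm
  rw [htranslate, htranslate, setIntegral_closedBall_zero_sq_inner_add_const μ _ _ hR,
    setIntegral_closedBall_zero_sq_inner_add_const μ _ _ hρ]
  calc R ^ (n + 2) * A + R ^ n * W
      ≤ R ^ (n + 2) * A + R ^ n * ((R / ρ) ^ 2 * W) := by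
        gcongr
        exact le_mul_of_one_le_left hW hscale
    _ = (R / ρ) ^ (n + 2) * (ρ ^ (n + 2) * A + ρ ^ n * W) := by
      set q := R / ρ
      rw [hRq]
      ring

end InnerProductSpace

/-- norm comparison of affine functions on concentric balls:
for concentric balls `B = B(z,ρ) ⊆ B̃ = B(z,R)` in `ℝ³` with `λ = ρ/R`, every affine
function `v` satisfies `‖v‖²_{L²(B̃)} ≤ ((1 + √(1−λ²))/λ)⁵ ‖v‖²_{L²(B)}`. -/
theorem stmt8
    (z : EuclideanSpace ℝ (Fin 3))
    (ρ R : ℝ) (hρ : 0 < ρ) (hρR : ρ ≤ R)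
    (g : EuclideanSpace ℝ (Fin 3)) (c : ℝ)
    (v : EuclideanSpace ℝ (Fin 3) → ℝ)
    (hv : ∀ x, v x = ⟪g, x⟫ + c) :
    (∫ x in Metric.closedBall z R, (v x) ^ 2)
      ≤ ((1 + Real.sqrt (1 - (ρ / R) ^ 2)) / (ρ / R)) ^ 5 *
        ∫ x in Metric.closedBall z ρ, (v x) ^ 2 := by
  have hR : 0 < R := hρ.trans_le hρR
  simp only [hv]
  calc ∫ x in closedBall z R, (⟪g, x⟫ + c) ^ 2
      ≤ (R / ρ) ^ 5 * ∫ x in closedBall z ρ, (⟪g, x⟫ + c) ^ 2 := by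
        simpa [finrank_euclideanSpace] using
          setIntegral_closedBall_sq_inner_add_const_le volume z g c hρ hρR
    _ ≤ _ := by
        gcongr ?_ ^ 5 * _
        rw [← inv_div, inv_eq_one_div]
        gcongr
        exact le_add_of_nonneg_right (Real.sqrt_nonneg _)
end

section
/- (Anisotropic Poincaré inequality towards a face) Let P ⊂ ℝ³ be a convex polyhedron with a face F contained in the plane {x₃ = 0}, such that the orthogonal projection of P onto that plane equals F, and let l_F be the supporting height of F (the maximum x₃-coordinate over P). Then for all u ∈ H¹(P), ‖u‖²_{L²(P)} ≤ 2 l_F ‖u‖²_{L²(F)} + 2 l_F² ‖∇u‖²_{L²(P)}. -/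
/-!
Slice `P` by vertical lines. The slice over a point `z` of the face is, by convexity, an
interval `[0, t₀] ⊆ [0, l]`, and on it the fundamental theorem of calculus and Cauchy–Schwarz
give `u(t)² ≤ 2 u(0)² + 2 t ∫₀ᵗ (∂ₓ₃u)²`. Integrating in `t` and then in `z` (Fubini) yields the
inequality, with `∫ u(z, 0)² dz` in place of the face term; the latter is larger because the
vertical projection of the face onto the base is 1-Lipschitz, so it does not increase Hausdorff
measure, and Hausdorff measure on the base is Lebesgue measure.
-/

open MeasureTheory Set
open scoped ENNReal

theorem sq_intervalIntegral_le {f : ℝ → ℝ} (hf : Continuous f) {t : ℝ} (ht : 0 ≤ t) :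
    (∫ s in (0 : ℝ)..t, f s) ^ 2 ≤ t * ∫ s in (0 : ℝ)..t, f s ^ 2 := by
  rcases ht.eq_or_lt with rfl | ht
  · simp
  set I := ∫ s in (0 : ℝ)..t, f s
  -- expand `0 ≤ ∫ (f - c)²` at the mean value `c = I / t`
  set c := I / t
  have hI : I = c * t := (div_mul_cancel₀ I ht.ne').symm
  have hint : ∀ g : ℝ → ℝ, Continuous g → IntervalIntegrable g volume 0 t :=
    fun g hg => hg.intervalIntegrable _ _
  have hexpand : ∫ s in (0 : ℝ)..t, (f s - c) ^ 2
      = (∫ s in (0 : ℝ)..t, f s ^ 2) - I * (2 * c) + t * c ^ 2 := by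
    simp_rw [show ∀ s, (f s - c) ^ 2 = f s ^ 2 - f s * (2 * c) + c ^ 2 from fun s => by ring]
    rw [intervalIntegral.integral_add (hint _ (by fun_prop)) (hint _ (by fun_prop)),
      intervalIntegral.integral_sub (hint _ (by fun_prop)) (hint _ (by fun_prop)),
      intervalIntegral.integral_mul_const, intervalIntegral.integral_const]
    simp [I]
  have hnonneg : 0 ≤ ∫ s in (0 : ℝ)..t, (f s - c) ^ 2 :=
    intervalIntegral.integral_nonneg ht.le fun s _ => sq_nonneg _
  rw [hexpand, hI] at hnonneg
  rw [hI]
  nlinarith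

theorem sq_le_of_hasDerivAt {g g' : ℝ → ℝ} (hg : ∀ t, HasDerivAt g (g' t) t)
    (hg' : Continuous g') {t : ℝ} (ht : 0 ≤ t) :
    g t ^ 2 ≤ 2 * g 0 ^ 2 + 2 * t * ∫ s in (0 : ℝ)..t, g' s ^ 2 := by
  have hcs := sq_intervalIntegral_le hg' ht
  rw [intervalIntegral.integral_eq_sub_of_hasDerivAt (fun s _ => hg s)
    (hg'.intervalIntegrable _ _)] at hcs
  nlinarith [sq_nonneg (g t - 2 * g 0)]

theorem setLIntegral_sq_le_of_ordConnected {g g' : ℝ → ℝ} {s : Set ℝ} {l : ℝ}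
    (hg : ∀ t, HasDerivAt g (g' t) t) (hg' : Continuous g') (hs : s.OrdConnected)
    (hs0 : 0 ∈ s) (hsl : s ⊆ Icc 0 l) :
    ∫⁻ t in s, ENNReal.ofReal (g t ^ 2) ≤ ENNReal.ofReal (2 * l * g 0 ^ 2) +
      ENNReal.ofReal (2 * l ^ 2) * ∫⁻ t in s, ENNReal.ofReal (g' t ^ 2) := by
  have hl : 0 ≤ l := (hsl hs0).2
  have hint : IntegrableOn (fun t => g' t ^ 2) s := (hg'.pow 2).integrableOn_Icc.mono_set hsl
  set A := ∫ t in s, g' t ^ 2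
  have hbound : ∀ t ∈ s, g t ^ 2 ≤ 2 * g 0 ^ 2 + 2 * l * A := by
    intro t ht
    obtain ⟨ht0, htl⟩ := hsl ht
    have hle : ∫ r in (0 : ℝ)..t, g' r ^ 2 ≤ A := by
      rw [intervalIntegral.integral_of_le ht0]
      exact setIntegral_mono_set hint (ae_of_all _ fun _ => sq_nonneg _)
        (Ioc_subset_Icc_self.trans (hs.out hs0 ht)).eventuallyLE
    have hnonneg : 0 ≤ ∫ r in (0 : ℝ)..t, g' r ^ 2 :=
      intervalIntegral.integral_nonneg ht0 fun _ _ => sq_nonneg _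
    nlinarith [sq_le_of_hasDerivAt hg hg' ht0, mul_le_mul htl hle hnonneg hl]
  calc ∫⁻ t in s, ENNReal.ofReal (g t ^ 2)
      ≤ ∫⁻ _ in s, ENNReal.ofReal (2 * g 0 ^ 2 + 2 * l * A) :=
        setLIntegral_mono' hs.measurableSet fun t ht => ENNReal.ofReal_le_ofReal (hbound t ht)
    _ = ENNReal.ofReal (2 * g 0 ^ 2 + 2 * l * A) * volume s := setLIntegral_const _ _
    _ ≤ ENNReal.ofReal (2 * g 0 ^ 2 + 2 * l * A) * ENNReal.ofReal l := by
        gcongr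
        simpa using measure_mono (μ := volume) hsl
    _ = ENNReal.ofReal (2 * l * g 0 ^ 2 + 2 * l ^ 2 * A) := by
        rw [← ENNReal.ofReal_mul' hl]
        ring_nf
    _ ≤ ENNReal.ofReal (2 * l * g 0 ^ 2) + ENNReal.ofReal (2 * l ^ 2) * ENNReal.ofReal A := by
        rw [← ENNReal.ofReal_mul (by positivity)]
        exact ENNReal.ofReal_add_le
    _ = _ := by
        rw [ofReal_integral_eq_lintegral_ofReal hint (ae_of_all _ fun _ => sq_nonneg _)]

theorem setLIntegral_comp_le_hausdorffMeasure {ι X : Type*} [Fintype ι] [EMetricSpace X]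
    [MeasurableSpace X] [BorelSpace X] {f : (ι → ℝ) → X} {g : X → ι → ℝ} (hf : Measurable f)
    (hg : LipschitzWith 1 g) (hgf : Function.LeftInverse g f) {G : Set (ι → ℝ)} {F : Set X}
    (hGF : MapsTo f G F) {k : X → ℝ≥0∞} (hk : Measurable k) :
    ∫⁻ z in G, k (f z) ≤ ∫⁻ y in F, k y ∂μH[Fintype.card ι] := by
  have hle : (volume.restrict G).map f ≤ (μH[Fintype.card ι] : Measure X).restrict F := by
    refine Measure.le_iff.2 fun A hA => ?_
    rw [Measure.map_apply hf hA, Measure.restrict_apply (hf hA), Measure.restrict_apply hA]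
    calc volume (f ⁻¹' A ∩ G)
        ≤ volume (g '' (A ∩ F)) :=
          measure_mono fun z hz => ⟨f z, ⟨hz.1, hGF hz.2⟩, hgf z⟩
      _ = μH[Fintype.card ι] (g '' (A ∩ F)) := by rw [hausdorffMeasure_pi_real]
      _ ≤ μH[Fintype.card ι] (A ∩ F) := by
          simpa only [ENNReal.coe_one, ENNReal.one_rpow, one_mul] using
            hg.hausdorffMeasure_image_le (Nat.cast_nonneg _) (A ∩ F)
  calc ∫⁻ z in G, k (f z) = ∫⁻ y, k y ∂(volume.restrict G).map f := (lintegral_map hk hf).symm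
    _ ≤ ∫⁻ y in F, k y ∂μH[Fintype.card ι] := lintegral_mono' hle le_rfl

namespace EuclideanSpace

theorem sq_apply_single_le_sq_norm {ι : Type*} [Fintype ι] [DecidableEq ι]
    (L : EuclideanSpace ℝ ι →L[ℝ] ℝ) (i : ι) : L (single i 1) ^ 2 ≤ ‖L‖ ^ 2 := by
  have h := L.le_opNorm (single i 1)
  rw [PiLp.norm_single, norm_one, mul_one] at h
  simpa only [Real.norm_eq_abs, sq_abs] using pow_le_pow_left₀ (norm_nonneg _) h 2

section Coordinates

variable {n : ℕ} (i : Fin (n + 1))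

noncomputable def insertCoord (z : Fin n → ℝ) (t : ℝ) : EuclideanSpace ℝ (Fin (n + 1)) :=
  WithLp.toLp 2 (i.insertNth t z)

def removeCoord (x : EuclideanSpace ℝ (Fin (n + 1))) : Fin n → ℝ :=
  i.removeNth x.ofLp

@[simp] theorem insertCoord_apply_same (z : Fin n → ℝ) (t : ℝ) : insertCoord i z t i = t := by
  simp [insertCoord]

@[simp] theorem removeCoord_insertCoord (z : Fin n → ℝ) (t : ℝ) :
    removeCoord i (insertCoord i z t) = z := by
  ext j; simp [insertCoord, removeCoord, Fin.removeNth]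

@[simp] theorem insertCoord_removeCoord (x : EuclideanSpace ℝ (Fin (n + 1))) :
    insertCoord i (removeCoord i x) (x i) = x := by
  simp [insertCoord, removeCoord]

theorem insertCoord_eq_add_smul (z : Fin n → ℝ) (t : ℝ) :
    insertCoord i z t = insertCoord i z 0 + t • single i 1 := by
  ext j
  induction j using i.succAboveCases <;> simp [insertCoord]

theorem hasDerivAt_insertCoord (z : Fin n → ℝ) (t : ℝ) :
    HasDerivAt (insertCoord i z) (single i 1) t := by
  rw [funext (insertCoord_eq_add_smul i z)]
  simpa using ((hasDerivAt_id t).smul_const (single i (1 : ℝ))).const_add (insertCoord i z 0)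

theorem continuous_insertCoord :
    Continuous fun p : (Fin n → ℝ) × ℝ => insertCoord i p.1 p.2 := by
  unfold insertCoord
  fun_prop

theorem lipschitzWith_removeCoord : LipschitzWith 1 (removeCoord i) :=
  LipschitzWith.of_dist_le_mul fun x y => by
    rw [NNReal.coe_one, one_mul, dist_pi_le_iff dist_nonneg]
    exact fun j => PiLp.dist_apply_le x y _

theorem lipschitzWith_insertCoord_zero :
    ∃ K, LipschitzWith K fun z : Fin n → ℝ => insertCoord i z 0 := by
  have hinsert : LipschitzWith 1 fun z : Fin n → ℝ => Fin.insertNth (α := fun _ => ℝ) i 0 z :=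
    LipschitzWith.of_dist_le_mul fun z w => by
      rw [NNReal.coe_one, one_mul, dist_pi_le_iff dist_nonneg]
      intro j
      induction j using i.succAboveCases
      · simp
      · simpa using dist_le_pi_dist z w _
  exact ⟨_, (PiLp.lipschitzWith_toLp 2 _).comp hinsert⟩

theorem measurePreserving_insertCoord :
    MeasurePreserving (fun p : ℝ × (Fin n → ℝ) => insertCoord i p.2 p.1) :=
  (volume_preserving_symm_measurableEquiv_toLp (Fin (n + 1))).symm.comp
    (volume_preserving_piFinSuccAbove (fun _ => ℝ) i).symm

theorem lintegral_eq_lintegral_insertCoord {k : EuclideanSpace ℝ (Fin (n + 1)) → ℝ≥0∞}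
    (hk : Measurable k) : ∫⁻ x, k x = ∫⁻ z, ∫⁻ t, k (insertCoord i z t) := by
  rw [← (measurePreserving_insertCoord i).lintegral_comp hk, Measure.volume_eq_prod]
  exact lintegral_prod_symm _ (hk.comp (measurePreserving_insertCoord i).measurable).aemeasurable

theorem setLIntegral_eq_lintegral_insertCoord {k : EuclideanSpace ℝ (Fin (n + 1)) → ℝ≥0∞}
    (hk : Measurable k) {P : Set (EuclideanSpace ℝ (Fin (n + 1)))} (hP : IsClosed P) :
    ∫⁻ x in P, k x = ∫⁻ z, ∫⁻ t in insertCoord i z ⁻¹' P, k (insertCoord i z t) := by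
  rw [← lintegral_indicator hP.measurableSet, lintegral_eq_lintegral_insertCoord i
    (hk.indicator hP.measurableSet)]
  refine lintegral_congr fun z => ?_
  rw [← lintegral_indicator ((hP.preimage _).measurableSet)]
  · rfl
  · exact (continuous_insertCoord i).comp (Continuous.prodMk_right z)

end Coordinates

section Poincare

variable {n : ℕ} {i : Fin (n + 1)} {P F : Set (EuclideanSpace ℝ (Fin (n + 1)))} {l : ℝ}
  {u : EuclideanSpace ℝ (Fin (n + 1)) → ℝ}

theorem ordConnected_preimage_insertCoord (hP : Convex ℝ P) (z : Fin n → ℝ) :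
    (insertCoord i z ⁻¹' P).OrdConnected := by
  rw [← convex_iff_ordConnected, funext (insertCoord_eq_add_smul i z)]
  exact (hP.translate_preimage_right _).linear_preimage (LinearMap.toSpanSingleton ℝ _ (single i 1))

theorem setLIntegral_preimage_insertCoord_sq_le (hPconv : Convex ℝ P)
    (hheight : ∀ x ∈ P, 0 ≤ x i ∧ x i ≤ l)
    (hbase : ∀ x ∈ P, insertCoord i (removeCoord i x) 0 ∈ P) (hu : ContDiff ℝ 1 u)
    (z : Fin n → ℝ) :
    ∫⁻ t in insertCoord i z ⁻¹' P, ENNReal.ofReal (u (insertCoord i z t) ^ 2) ≤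
      ((insertCoord i · 0) ⁻¹' P).indicator
          (fun z => ENNReal.ofReal (2 * l * u (insertCoord i z 0) ^ 2)) z +
        ENNReal.ofReal (2 * l ^ 2) *
          ∫⁻ t in insertCoord i z ⁻¹' P, ENNReal.ofReal (‖fderiv ℝ u (insertCoord i z t)‖ ^ 2) := by
  by_cases hz : insertCoord i z 0 ∈ P
  · rw [indicator_of_mem (show z ∈ (insertCoord i · 0) ⁻¹' P from hz)]
    have hderiv : ∀ t, HasDerivAt (fun t => u (insertCoord i z t))
        (fderiv ℝ u (insertCoord i z t) (single i 1)) t := fun t =>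
      (hu.differentiable one_ne_zero _).hasFDerivAt.comp_hasDerivAt t (hasDerivAt_insertCoord i z t)
    have hcont : Continuous fun t => fderiv ℝ u (insertCoord i z t) (single i 1) :=
      ((hu.continuous_fderiv one_ne_zero).comp
        ((continuous_insertCoord i).comp (Continuous.prodMk_right z))).clm_apply continuous_const
    have hslice : insertCoord i z ⁻¹' P ⊆ Icc 0 l := fun t ht => by simpa using hheight _ ht
    refine (setLIntegral_sq_le_of_ordConnected hderiv hcont
      (ordConnected_preimage_insertCoord hPconv z) hz hslice).trans ?_
    gcongr _ + _ * ∫⁻ _ in _, ENNReal.ofReal ?_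
    exact sq_apply_single_le_sq_norm _ i
  · -- the slice is empty, since `P` contains the foot `insertCoord i z 0` of each of its points
    have hempty : insertCoord i z ⁻¹' P = ∅ :=
      eq_empty_of_forall_notMem fun t ht => hz (by simpa using hbase _ ht)
    simp [hempty]

theorem hausdorffMeasure_lt_top_of_apply_eq_zero {K : Set (EuclideanSpace ℝ (Fin (n + 1)))}
    (hK : IsCompact K) (hKplane : ∀ y ∈ K, y i = 0) : μH[n] K < ⊤ := by
  obtain ⟨C, hC⟩ := lipschitzWith_insertCoord_zero i
  calc μH[n] K
      ≤ μH[n] ((insertCoord i · 0) '' (removeCoord i '' K)) := by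
        refine measure_mono fun y hy => ⟨removeCoord i y, mem_image_of_mem _ hy, ?_⟩
        simpa [hKplane y hy] using insertCoord_removeCoord i y
    _ ≤ C ^ (n : ℝ) * μH[n] (removeCoord i '' K) := hC.hausdorffMeasure_image_le n.cast_nonneg _
    _ < ⊤ := by
        refine ENNReal.mul_lt_top (by simp) ?_
        simpa [← hausdorffMeasure_pi_real] using
          (hK.image (lipschitzWith_removeCoord i).continuous).measure_lt_top (μ := volume)

theorem setLIntegral_sq_le_face_add_fderiv (hPconv : Convex ℝ P) (hPclosed : IsClosed P)
    (hheight : ∀ x ∈ P, 0 ≤ x i ∧ x i ≤ l) (hFP : F ⊆ P)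
    (hbase : ∀ x ∈ P, insertCoord i (removeCoord i x) 0 ∈ F) (hu : ContDiff ℝ 1 u) :
    ∫⁻ x in P, ENNReal.ofReal (u x ^ 2) ≤
      ENNReal.ofReal (2 * l) * ∫⁻ y in F, ENNReal.ofReal (u y ^ 2) ∂μH[n] +
        ENNReal.ofReal (2 * l ^ 2) * ∫⁻ x in P, ENNReal.ofReal (‖fderiv ℝ u x‖ ^ 2) := by
  have hbase' : Continuous fun z : Fin n → ℝ => insertCoord i z 0 :=
    (continuous_insertCoord i).comp (Continuous.prodMk_left 0)
  set G := (insertCoord i · 0) ⁻¹' P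
  have hG : MeasurableSet G := (hPclosed.preimage hbase').measurableSet
  have hsq : Measurable fun x => ENNReal.ofReal (u x ^ 2) := by
    have := hu.continuous; fun_prop
  have hgrad : Measurable fun x => ENNReal.ofReal (‖fderiv ℝ u x‖ ^ 2) := by
    have := hu.continuous_fderiv one_ne_zero; fun_prop
  have hface : ∫⁻ z in G, ENNReal.ofReal (2 * l * u (insertCoord i z 0) ^ 2) ≤
      ENNReal.ofReal (2 * l) * ∫⁻ y in F, ENNReal.ofReal (u y ^ 2) ∂μH[n] := by
    simp_rw [ENNReal.ofReal_mul' (sq_nonneg _)]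
    rw [lintegral_const_mul' _ _ ENNReal.ofReal_ne_top]
    gcongr
    simpa using setLIntegral_comp_le_hausdorffMeasure hbase'.measurable
      (lipschitzWith_removeCoord i) (removeCoord_insertCoord i · 0)
      (fun z hz => by simpa using hbase _ hz) hsq
  calc ∫⁻ x in P, ENNReal.ofReal (u x ^ 2)
      = ∫⁻ z, ∫⁻ t in insertCoord i z ⁻¹' P, ENNReal.ofReal (u (insertCoord i z t) ^ 2) :=
        setLIntegral_eq_lintegral_insertCoord i hsq hPclosed
    _ ≤ ∫⁻ z, (G.indicator (fun z => ENNReal.ofReal (2 * l * u (insertCoord i z 0) ^ 2)) z +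
          ENNReal.ofReal (2 * l ^ 2) * ∫⁻ t in insertCoord i z ⁻¹' P,
            ENNReal.ofReal (‖fderiv ℝ u (insertCoord i z t)‖ ^ 2)) :=
        lintegral_mono fun z => setLIntegral_preimage_insertCoord_sq_le hPconv hheight
          (fun x hx => hFP (hbase x hx)) hu z
    _ = (∫⁻ z in G, ENNReal.ofReal (2 * l * u (insertCoord i z 0) ^ 2)) +
          ENNReal.ofReal (2 * l ^ 2) * ∫⁻ x in P, ENNReal.ofReal (‖fderiv ℝ u x‖ ^ 2) := by
        rw [lintegral_add_left (Measurable.indicator (by have := hu.continuous; fun_prop) hG),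
          lintegral_indicator hG, lintegral_const_mul' _ _ ENNReal.ofReal_ne_top,
          setLIntegral_eq_lintegral_insertCoord i hgrad hPclosed]
    _ ≤ _ := by gcongr

theorem setIntegral_sq_le_face_add_fderiv (hPconv : Convex ℝ P) (hPcomp : IsCompact P) (hFP : F ⊆ P)
    (hFplane : ∀ y ∈ F, y i = 0) (hl : 0 ≤ l) (hheight : ∀ x ∈ P, 0 ≤ x i ∧ x i ≤ l)
    (hproj : ∀ x ∈ P, ∃ y ∈ F, removeCoord i y = removeCoord i x) (hu : ContDiff ℝ 1 u) :
    ∫ x in P, u x ^ 2 ≤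
      2 * l * ∫ y in F, u y ^ 2 ∂μH[n] + 2 * l ^ 2 * ∫ x in P, ‖fderiv ℝ u x‖ ^ 2 := by
  have hbase : ∀ x ∈ P, insertCoord i (removeCoord i x) 0 ∈ F := by
    intro x hx
    obtain ⟨y, hy, hyx⟩ := hproj x hx
    rwa [← hyx, ← hFplane y hy, insertCoord_removeCoord]
  have hsq : Continuous fun x => u x ^ 2 := hu.continuous.pow 2
  have hgrad : Continuous fun x => ‖fderiv ℝ u x‖ ^ 2 :=
    (hu.continuous_fderiv one_ne_zero).norm.pow 2
  -- `F` need not be measurable: integrate over the compact part of `P` in the hyperplane instead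
  have hFint : IntegrableOn (fun x => u x ^ 2) F μH[n] := by
    set K := P ∩ {x | x i = 0}
    have hK : IsCompact K := hPcomp.inter_right (isClosed_eq (by fun_prop) continuous_const)
    obtain ⟨C, hC⟩ := hK.exists_bound_of_continuousOn hsq.continuousOn
    refine (Measure.integrableOn_of_bounded (M := C) (hausdorffMeasure_lt_top_of_apply_eq_zero hK
      fun y hy => hy.2).ne hsq.aestronglyMeasurable ?_).mono_set fun y hy => ⟨hFP hy, hFplane y hy⟩
    exact (ae_restrict_iff' hK.measurableSet).2 (ae_of_all _ hC)
  have key := setLIntegral_sq_le_face_add_fderiv hPconv hPcomp.isClosed hheight hFP hbase hu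
  rw [← ofReal_integral_eq_lintegral_ofReal (hsq.continuousOn.integrableOn_compact hPcomp)
      (ae_of_all _ fun _ => sq_nonneg _),
    ← ofReal_integral_eq_lintegral_ofReal hFint (ae_of_all _ fun _ => sq_nonneg _),
    ← ofReal_integral_eq_lintegral_ofReal (hgrad.continuousOn.integrableOn_compact hPcomp)
      (ae_of_all _ fun _ => sq_nonneg _),
    ← ENNReal.ofReal_mul (by positivity), ← ENNReal.ofReal_mul (by positivity),
    ← ENNReal.ofReal_add] at key
  · exact (ENNReal.ofReal_le_ofReal_iff (by positivity)).1 key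
  all_goals exact mul_nonneg (by positivity) (integral_nonneg fun _ => sq_nonneg _)

end Poincare

end EuclideanSpace

theorem stmt9_general
    (P : Set (EuclideanSpace ℝ (Fin 3)))
    (hPconv : Convex ℝ P) (hPcomp : IsCompact P)
    (F : Set (EuclideanSpace ℝ (Fin 3)))
    (hFP : F ⊆ P)
    (hFplane : ∀ y ∈ F, y 2 = 0)
    (l : ℝ) (hl : 0 ≤ l)
    (hheight : ∀ x ∈ P, 0 ≤ x 2 ∧ x 2 ≤ l)
    (hproj : ∀ x ∈ P, ∃ y ∈ F, y 0 = x 0 ∧ y 1 = x 1)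
    (u : EuclideanSpace ℝ (Fin 3) → ℝ)
    (hu : ContDiff ℝ 1 u) :
    (∫ x in P, (u x) ^ 2)
      ≤ 2 * l * (∫ y in F, (u y) ^ 2 ∂(μH[2])) +
        2 * l ^ 2 * ∫ x in P, ‖fderiv ℝ u x‖ ^ 2 := by
  have hproj' :
      ∀ x ∈ P, ∃ y ∈ F, EuclideanSpace.removeCoord 2 y = EuclideanSpace.removeCoord 2 x := by
    intro x hx
    obtain ⟨y, hy, h0, h1⟩ := hproj x hx
    refine ⟨y, hy, funext fun j => ?_⟩
    fin_cases j
    exacts [h0, h1]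
  simpa using EuclideanSpace.setIntegral_sq_le_face_add_fderiv (i := 2) hPconv hPcomp hFP hFplane
    hl hheight hproj' hu

/-- anisotropic Poincaré inequality towards a face:
let `P ⊆ ℝ³` be a convex polyhedron with a face `F` in the plane `{x₃ = 0}` such that
the vertical projection of `P` onto that plane equals `F`, and let `l` be the
supporting height (`0 ≤ x₃ ≤ l` on `P`).  Then for every `u ∈ H¹(P)` (represented by a
`C¹` function), `‖u‖²_{L²(P)} ≤ 2 l ‖u‖²_{L²(F)} + 2 l² ‖∇u‖²_{L²(P)}`, the face norm
being with respect to the 2-dimensional Hausdorff measure. -/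
theorem stmt9
    (P : Set (EuclideanSpace ℝ (Fin 3)))
    (hPconv : Convex ℝ P) (hPcomp : IsCompact P) (hPne : (interior P).Nonempty)
    (F : Set (EuclideanSpace ℝ (Fin 3)))
    (hFP : F ⊆ P)
    (hFplane : ∀ y ∈ F, y 2 = 0)
    (l : ℝ) (hl : 0 ≤ l)
    (hheight : ∀ x ∈ P, 0 ≤ x 2 ∧ x 2 ≤ l)
    (hproj : ∀ x ∈ P, ∃ y ∈ F, y 0 = x 0 ∧ y 1 = x 1)
    (u : EuclideanSpace ℝ (Fin 3) → ℝ)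
    (hu : ContDiff ℝ 1 u) :
    (∫ x in P, (u x) ^ 2)
      ≤ 2 * l * (∫ y in F, (u y) ^ 2 ∂(μH[2])) +
        2 * l ^ 2 * ∫ x in P, ‖fderiv ℝ u x‖ ^ 2 :=
  stmt9_general P hPconv hPcomp F hFP hFplane l hl hheight hproj u hu
end

section
/- (Gradient control by tangential edge derivatives) Let T be a triangle with edges e₁, e₂, e₃, unit tangent vectors t_i, circumradius R_T, and maximum angle θ_M. Then for every affine v on T, ‖∇v‖²_{L²(T)} = R_T Σ_{i=1}^{3} cos(θ_i) ‖∇v · t_i‖²_{L²(e_i)} (cotangent formula), and consequently, using R_T ≤ h_T/(2 sin θ_M), ‖∇v‖_{L²(T)} ≤ (h_T)^{1/2}/√(2 sin θ_M) Σ_{i=1}^{3} ‖∇v · t_i‖_{L²(e_i)}. -/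
/-!
By the law of sines `|eᵢ| = 2 R_T sin θᵢ`, the `i`-th term `R_T cos θᵢ |eᵢ| (g·tᵢ)²` equals
`cot θᵢ ⟪g, eᵢ⟫² / 2`, and `cot θ_A = ⟪B - A, C - A⟫ / (2|T|)` since
`2|T| = |B - A| |C - A| sin θ_A = |det (B - A, C - A)|` (the area is `|det|` times the area `1/2`
of the standard triangle). The cotangent formula thus reduces to the planar identity
`Σ ⟪B - A, C - A⟫ ⟪g, C - B⟫² = det (B - A, C - A)² ‖g‖²`. The bound follows from
`cos θᵢ ≤ 1`, from `R_T ≤ h_T / (2 sin θ_M)` (the law of sines at the largest angle), and from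
`Σ xᵢ² ≤ (Σ xᵢ)²` for `xᵢ ≥ 0`.
-/

open EuclideanGeometry Real MeasureTheory
open scoped RealInnerProductSpace

open scoped Pointwise

local notation "ℝ²" => EuclideanSpace ℝ (Fin 2)

def cross (u w : ℝ²) : ℝ := u 0 * w 1 - u 1 * w 0

def stdTriangle : Set ℝ² := {x | 0 ≤ x 0 ∧ 0 ≤ x 1 ∧ x 0 + x 1 ≤ 1}

lemma convexHull_eq_stdTriangle :
    convexHull ℝ {0, EuclideanSpace.single 0 1, EuclideanSpace.single 1 1} = stdTriangle := by
  apply subset_antisymm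
  · refine convexHull_min ?_ ?_
    · rintro x (rfl | rfl | rfl) <;> simp [stdTriangle]
    · intro x hx y hy a b ha hb hab
      simp only [stdTriangle, Set.mem_ofPred_eq, PiLp.add_apply, PiLp.smul_apply, smul_eq_mul] at *
      refine ⟨add_nonneg (mul_nonneg ha hx.1) (mul_nonneg hb hy.1),
        add_nonneg (mul_nonneg ha hx.2.1) (mul_nonneg hb hy.2.1), ?_⟩
      nlinarith [mul_le_mul_of_nonneg_left hx.2.2 ha, mul_le_mul_of_nonneg_left hy.2.2 hb]
  · rintro x ⟨hx₀, hx₁, hx⟩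
    have hsum : x = ∑ i, ![1 - x 0 - x 1, x 0, x 1] i •
        ![0, EuclideanSpace.single 0 1, EuclideanSpace.single 1 1] i := by
      ext i; fin_cases i <;> simp [Fin.sum_univ_three]
    rw [hsum]
    refine (convex_convexHull ℝ _).sum_mem (fun i _ => ?_) ?_ (fun i _ => subset_convexHull ℝ _ ?_)
    · fin_cases i <;> simp <;> linarith
    · simp [Fin.sum_univ_three]; ring
    · fin_cases i <;> simp

lemma volume_stdTriangle_s10 : volume stdTriangle = ENNReal.ofReal 2⁻¹ := by
  have he := (EuclideanSpace.volume_preserving_symm_measurableEquiv_toLp (Fin 2)).trans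
    (volume_preserving_finTwoArrow ℝ)
  set S : Set (ℝ × ℝ) := {p | 0 ≤ p.1 ∧ 0 ≤ p.2 ∧ p.1 + p.2 ≤ 1}
  have hS : MeasurableSet S :=
    (measurableSet_le measurable_const measurable_fst).inter
      ((measurableSet_le measurable_const measurable_snd).inter
        (measurableSet_le (measurable_fst.add measurable_snd) measurable_const))
  have hslice (x : ℝ) : volume (Prod.mk x ⁻¹' S) =
      (Set.Icc 0 1).indicator (fun x => ENNReal.ofReal (1 - x)) x := by
    by_cases hx : x ∈ Set.Icc (0:ℝ) 1
    · rw [Set.indicator_of_mem hx, ← sub_zero (1 - x), ← Real.volume_Icc]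
      congr 1; ext y
      simp only [S, Set.mem_preimage, Set.mem_ofPred_eq, Set.mem_Icc, hx.1, true_and]
      constructor <;> intro h <;> constructor <;> linarith [h.1, h.2]
    · have hempty : Prod.mk x ⁻¹' S = ∅ := Set.eq_empty_iff_forall_notMem.2 fun y hy =>
        hx ⟨hy.1, by linarith [hy.2.1, hy.2.2]⟩
      rw [Set.indicator_of_notMem hx, hempty, measure_empty]
  calc volume stdTriangle = volume S := he.measure_preimage hS.nullMeasurableSet
    _ = ∫⁻ x, (Set.Icc 0 1).indicator (fun x => ENNReal.ofReal (1 - x)) x := by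
        rw [Measure.volume_eq_prod, Measure.prod_apply hS]; simp_rw [hslice]
    _ = ENNReal.ofReal 2⁻¹ := by
        rw [lintegral_indicator measurableSet_Icc, ← ofReal_integral_eq_lintegral_ofReal
          (Continuous.integrableOn_Icc (by fun_prop))
          (ae_restrict_of_forall_mem measurableSet_Icc fun x hx => sub_nonneg.2 hx.2),
          integral_Icc_eq_integral_Ioc, ← intervalIntegral.integral_of_le zero_le_one,
          intervalIntegral.integral_sub intervalIntegrable_const
            intervalIntegral.intervalIntegrable_id]
        norm_num

lemma det_constr_basisFun (u w : ℝ²) :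
    LinearMap.det ((EuclideanSpace.basisFun (Fin 2) ℝ).toBasis.constr ℝ ![u, w]) = cross u w := by
  rw [← LinearMap.det_toMatrix (EuclideanSpace.basisFun (Fin 2) ℝ).toBasis, Matrix.det_fin_two]
  simp [LinearMap.toMatrix_apply, cross]
  ring

lemma triArea_eq_abs_cross (A B C : ℝ²) : triArea A B C = |cross (B - A) (C - A)| / 2 := by
  set M := (EuclideanSpace.basisFun (Fin 2) ℝ).toBasis.constr ℝ ![B - A, C - A]
  have hhull : convexHull ℝ {A, B, C} = A +ᵥ M '' stdTriangle := by
    rw [← convexHull_eq_stdTriangle, LinearMap.image_convexHull, ← convexHull_vadd]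
    simp [M, Set.image_insert_eq, Set.vadd_set_insert]
  rw [triArea, hhull, measure_vadd, Measure.addHaar_image_linearMap, det_constr_basisFun,
    volume_stdTriangle_s10, ENNReal.toReal_mul, ENNReal.toReal_ofReal (abs_nonneg _),
    ENNReal.toReal_ofReal (by norm_num), div_eq_mul_inv]

lemma inner_eq_coord (x y : ℝ²) : ⟪x, y⟫ = x 0 * y 0 + x 1 * y 1 := by
  simp [EuclideanSpace.inner_eq_star_dotProduct, dotProduct, Fin.sum_univ_two, mul_comm]

lemma sin_angle_mul_norm_mul_norm_eq_abs_cross (u w : ℝ²) :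
    sin (InnerProductGeometry.angle u w) * (‖u‖ * ‖w‖) = |cross u w| := by
  rw [InnerProductGeometry.sin_angle_mul_norm_mul_norm, ← Real.sqrt_sq_eq_abs]
  congr 1
  simp only [inner_eq_coord, cross]
  ring

lemma sum_inner_mul_inner_sq_eq_cross_sq_mul_norm_sq (A B C g : ℝ²) :
    ⟪B - A, C - A⟫ * ⟪g, C - B⟫ ^ 2 + ⟪A - B, C - B⟫ * ⟪g, C - A⟫ ^ 2
      + ⟪A - C, B - C⟫ * ⟪g, B - A⟫ ^ 2 = cross (B - A) (C - A) ^ 2 * ‖g‖ ^ 2 := by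
  simp only [← real_inner_self_eq_norm_sq, inner_eq_coord, cross, PiLp.sub_apply]
  ring

theorem dist_eq_two_mul_mul_sin_angle_of_dist_eq {V P : Type*} [NormedAddCommGroup V]
    [InnerProductSpace ℝ V] [MetricSpace P] [NormedAddTorsor V P] (hV : Module.finrank ℝ V = 2)
    {A B C O : P} {ρ : ℝ} (h : ¬Collinear ℝ {A, B, C}) (hA : dist O A = ρ) (hB : dist O B = ρ)
    (hC : dist O C = ρ) : dist A C = 2 * ρ * sin (∠ A B C) := by
  have : FiniteDimensional ℝ V := Module.finite_of_finrank_eq_succ hV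
  let t : Affine.Triangle ℝ P := ⟨![A, B, C], affineIndependent_iff_not_collinear_set.2 h⟩
  have hspan : affineSpan ℝ (Set.range t.points) = ⊤ :=
    t.independent.affineSpan_eq_top_iff_card_eq_finrank_add_one.2 (by simp [hV])
  have hρ : ρ = t.circumradius :=
    t.eq_circumradius_of_dist_eq (hspan ▸ AffineSubspace.mem_top _ _ O) fun i => by
      fin_cases i <;> simp [t, dist_comm _ O, hA, hB, hC]
  have hlaw : dist A C / sin (∠ A B C) = 2 * ρ := by
    simpa [t, ← hρ] using t.dist_div_sin_angle_eq_two_mul_circumradius (i₁ := 0) (i₂ := 1)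
      (i₃ := 2) (by decide) (by decide) (by decide)
  rwa [div_eq_iff (sin_pos_of_not_collinear h).ne'] at hlaw

lemma mul_cos_angle_mul_dist_mul_inner_sq {P Q R g : ℝ²} {ρ : ℝ} (h : ¬Collinear ℝ {Q, P, R})
    (hρ : dist Q R = 2 * ρ * sin (∠ Q P R)) :
    ρ * (cos (∠ Q P R) * (dist Q R * ⟪g, ‖R - Q‖⁻¹ • (R - Q)⟫ ^ 2)) =
      ⟪Q - P, R - P⟫ * ⟪g, R - Q⟫ ^ 2 / (2 * |cross (Q - P) (R - P)|) := by
  have hQP : ‖Q - P‖ ≠ 0 := norm_ne_zero_iff.2 (sub_ne_zero.2 (ne₁₂_of_not_collinear h))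
  have hRP : ‖R - P‖ ≠ 0 := norm_ne_zero_iff.2 (sub_ne_zero.2 (ne₂₃_of_not_collinear h).symm)
  have hRQ : ‖R - Q‖ ≠ 0 := norm_ne_zero_iff.2 (sub_ne_zero.2 (ne₁₃_of_not_collinear h).symm)
  have hcos : cos (∠ Q P R) * (‖Q - P‖ * ‖R - P‖) = ⟪Q - P, R - P⟫ :=
    InnerProductGeometry.cos_angle_mul_norm_mul_norm _ _
  have hcross : sin (∠ Q P R) * (‖Q - P‖ * ‖R - P‖) = |cross (Q - P) (R - P)| :=
    sin_angle_mul_norm_mul_norm_eq_abs_cross _ _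
  rw [dist_comm, dist_eq_norm] at hρ ⊢
  have hρ0 : ρ ≠ 0 := by rintro rfl; simp [hρ] at hRQ
  rw [real_inner_smul_right, ← hcos, ← hcross, hρ]
  field_simp

theorem triArea_mul_norm_sq_eq_circumradius_mul_sum (A B C g : ℝ²) {ρ : ℝ}
    (h : ¬Collinear ℝ {A, B, C}) (hA : dist B C = 2 * ρ * sin (∠ B A C))
    (hB : dist A C = 2 * ρ * sin (∠ A B C)) (hC : dist A B = 2 * ρ * sin (∠ A C B)) :
    triArea A B C * ‖g‖ ^ 2 =
      ρ * (cos (∠ B A C) * (dist B C * ⟪g, ‖C - B‖⁻¹ • (C - B)⟫ ^ 2)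
        + cos (∠ A B C) * (dist A C * ⟪g, ‖C - A‖⁻¹ • (C - A)⟫ ^ 2)
        + cos (∠ A C B) * (dist A B * ⟪g, ‖B - A‖⁻¹ • (B - A)⟫ ^ 2)) := by
  have hcrossB : |cross (A - B) (C - B)| = |cross (B - A) (C - A)| := by
    rw [← abs_neg]; congr 1; simp only [cross, PiLp.sub_apply]; ring
  have hcrossC : |cross (A - C) (B - C)| = |cross (B - A) (C - A)| := by
    congr 1; simp only [cross, PiLp.sub_apply]; ring
  rw [mul_add, mul_add,
    mul_cos_angle_mul_dist_mul_inner_sq (by rwa [Set.insert_comm]) hA,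
    mul_cos_angle_mul_dist_mul_inner_sq h hB,
    mul_cos_angle_mul_dist_mul_inner_sq (by rwa [Set.pair_comm]) hC,
    hcrossB, hcrossC, ← add_div, ← add_div, sum_inner_mul_inner_sq_eq_cross_sq_mul_norm_sq,
    triArea_eq_abs_cross, ← sq_abs (cross _ _)]
  rcases eq_or_ne |cross (B - A) (C - A)| 0 with hS | hS
  · simp [hS]
  · field_simp

theorem le_max_div_two_mul_sin_max {ρ a b c α β γ : ℝ} (hα : 0 < sin α) (hβ : 0 < sin β)
    (hγ : 0 < sin γ) (ha : a = 2 * ρ * sin α) (hb : b = 2 * ρ * sin β) (hc : c = 2 * ρ * sin γ) :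
    ρ ≤ max a (max b c) / (2 * sin (max α (max β γ))) := by
  have key {θ : ℝ} (hθ : 0 < sin θ) (h : 2 * ρ * sin θ ≤ max a (max b c)) :
      ρ ≤ max a (max b c) / (2 * sin θ) := by
    rw [le_div_iff₀ (by positivity)]; linarith
  rcases max_choice α (max β γ) with h | h <;> rw [h]
  · exact key hα (ha ▸ le_max_left _ _)
  · rcases max_choice β γ with h' | h' <;> rw [h']
    · exact key hβ (hb ▸ le_max_of_le_right (le_max_left _ _))
    · exact key hγ (hc ▸ le_max_of_le_right (le_max_right _ _))

theorem sqrt_mul_le_sqrt_mul_sum_sqrt_mul_abs {ι : Type*} (s : Finset ι) {a G ρ K : ℝ}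
    {c d y : ι → ℝ} (hG : 0 ≤ G) (hρ : 0 ≤ ρ) (hρK : ρ ≤ K) (hc : ∀ i ∈ s, c i ≤ 1)
    (hd : ∀ i ∈ s, 0 ≤ d i) (h : a * G ^ 2 = ρ * ∑ i ∈ s, c i * (d i * y i ^ 2)) :
    √a * G ≤ √K * ∑ i ∈ s, √(d i) * |y i| := by
  have hsq : ∀ i ∈ s, d i * y i ^ 2 = (√(d i) * |y i|) ^ 2 := fun i hi => by
    rw [mul_pow, sq_sqrt (hd i hi), sq_abs]
  have hsum : 0 ≤ ∑ i ∈ s, √(d i) * |y i| := Finset.sum_nonneg fun i _ => by positivity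
  have hbound : a * G ^ 2 ≤ K * (∑ i ∈ s, √(d i) * |y i|) ^ 2 := calc
    a * G ^ 2 ≤ ρ * ∑ i ∈ s, d i * y i ^ 2 := by
      rw [h]
      exact mul_le_mul_of_nonneg_left (Finset.sum_le_sum fun i hi =>
        mul_le_of_le_one_left (mul_nonneg (hd i hi) (sq_nonneg _)) (hc i hi)) hρ
    _ = ρ * ∑ i ∈ s, (√(d i) * |y i|) ^ 2 := by rw [Finset.sum_congr rfl hsq]
    _ ≤ K * (∑ i ∈ s, √(d i) * |y i|) ^ 2 :=
      mul_le_mul hρK (Finset.sum_sq_le_sq_sum_of_nonneg fun i _ => by positivity)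
        (Finset.sum_nonneg fun i _ => sq_nonneg _) (hρ.trans hρK)
  calc √a * G = √(a * G ^ 2) := by rw [sqrt_mul' _ (sq_nonneg G), sqrt_sq hG]
    _ ≤ √(K * (∑ i ∈ s, √(d i) * |y i|) ^ 2) := sqrt_le_sqrt hbound
    _ = √K * ∑ i ∈ s, √(d i) * |y i| := by rw [sqrt_mul' _ (sq_nonneg _), sqrt_sq hsum]

theorem stmt10_general
    (A B C : EuclideanSpace ℝ (Fin 2))
    (hnd : AffineIndependent ℝ ![A, B, C])
    (RT : ℝ)
    (hcirc : ∃ O : EuclideanSpace ℝ (Fin 2), dist O A = RT ∧ dist O B = RT ∧ dist O C = RT)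
    (g : EuclideanSpace ℝ (Fin 2)) :
    triArea A B C * ‖g‖ ^ 2
        = RT * (Real.cos (∠ B A C) * (dist B C * ⟪g, (‖C - B‖⁻¹ • (C - B) : EuclideanSpace ℝ (Fin 2))⟫ ^ 2)
            + Real.cos (∠ A B C) * (dist A C * ⟪g, (‖C - A‖⁻¹ • (C - A) : EuclideanSpace ℝ (Fin 2))⟫ ^ 2)
            + Real.cos (∠ A C B) * (dist A B * ⟪g, (‖B - A‖⁻¹ • (B - A) : EuclideanSpace ℝ (Fin 2))⟫ ^ 2)) ∧
    Real.sqrt (triArea A B C) * ‖g‖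
        ≤ Real.sqrt (max (dist B C) (max (dist A C) (dist A B))) /
            Real.sqrt (2 * Real.sin (max (∠ B A C) (max (∠ A B C) (∠ A C B)))) *
          (Real.sqrt (dist B C) * |⟪g, (‖C - B‖⁻¹ • (C - B) : EuclideanSpace ℝ (Fin 2))⟫|
            + Real.sqrt (dist A C) * |⟪g, (‖C - A‖⁻¹ • (C - A) : EuclideanSpace ℝ (Fin 2))⟫|
            + Real.sqrt (dist A B) * |⟪g, (‖B - A‖⁻¹ • (B - A) : EuclideanSpace ℝ (Fin 2))⟫|) := by
  have hABC : ¬Collinear ℝ {A, B, C} := affineIndependent_iff_not_collinear_set.1 hnd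
  have hBAC : ¬Collinear ℝ {B, A, C} := by rwa [Set.insert_comm]
  have hACB : ¬Collinear ℝ {A, C, B} := by rwa [Set.pair_comm]
  obtain ⟨O, hOA, hOB, hOC⟩ := hcirc
  have hfin := finrank_euclideanSpace_fin (𝕜 := ℝ) (n := 2)
  have hA := dist_eq_two_mul_mul_sin_angle_of_dist_eq hfin hBAC hOB hOA hOC
  have hB := dist_eq_two_mul_mul_sin_angle_of_dist_eq hfin hABC hOA hOB hOC
  have hC := dist_eq_two_mul_mul_sin_angle_of_dist_eq hfin hACB hOA hOC hOB
  have hcot := triArea_mul_norm_sq_eq_circumradius_mul_sum A B C g hABC hA hB hC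
  refine ⟨hcot, ?_⟩
  have hRT := le_max_div_two_mul_sin_max (sin_pos_of_not_collinear hBAC)
    (sin_pos_of_not_collinear hABC) (sin_pos_of_not_collinear hACB) hA hB hC
  rw [← sqrt_div (le_max_of_le_left dist_nonneg)]
  have hbound := sqrt_mul_le_sqrt_mul_sum_sqrt_mul_abs Finset.univ (norm_nonneg g)
    (hOA ▸ dist_nonneg) hRT
    (c := ![cos (∠ B A C), cos (∠ A B C), cos (∠ A C B)]) (d := ![dist B C, dist A C, dist A B])
    (y := ![⟪g, ‖C - B‖⁻¹ • (C - B)⟫, ⟪g, ‖C - A‖⁻¹ • (C - A)⟫, ⟪g, ‖B - A‖⁻¹ • (B - A)⟫])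
    (by simp [Fin.forall_fin_succ, cos_le_one]) (by simp [Fin.forall_fin_succ])
    (by simpa only [Fin.sum_univ_three, Matrix.cons_val] using hcot)
  simpa only [Fin.sum_univ_three, Matrix.cons_val] using hbound

/-- gradient control by tangential edge derivatives:
for a nondegenerate triangle `ABC` with circumradius `R_T`, maximum angle `θM`,
diameter `h_T` (the longest edge), unit tangents `t_i` of the edges `e_i` opposite the
angles `θ_i`, and any affine `v` with gradient `g`, the cotangent formula
`‖∇v‖²_{L²(T)} = R_T Σᵢ cos θᵢ ‖∇v·tᵢ‖²_{L²(eᵢ)}` holds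
(with `‖∇v·tᵢ‖²_{L²(eᵢ)} = |eᵢ| (g·tᵢ)²` and `‖∇v‖²_{L²(T)} = |T| ‖g‖²`), and
consequently `‖∇v‖_{L²(T)} ≤ √h_T/√(2 sin θM) Σᵢ ‖∇v·tᵢ‖_{L²(eᵢ)}`. -/
theorem stmt10
    (A B C : EuclideanSpace ℝ (Fin 2))
    (hnd : AffineIndependent ℝ ![A, B, C])
    (RT : ℝ)
    (hcirc : ∃ O : EuclideanSpace ℝ (Fin 2), dist O A = RT ∧ dist O B = RT ∧ dist O C = RT)
    (g : EuclideanSpace ℝ (Fin 2)) (c : ℝ)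
    (v : EuclideanSpace ℝ (Fin 2) → ℝ)
    (hv : ∀ x, v x = ⟪g, x⟫ + c) :
    triArea A B C * ‖g‖ ^ 2
        = RT * (Real.cos (∠ B A C) * (dist B C * ⟪g, (‖C - B‖⁻¹ • (C - B) : EuclideanSpace ℝ (Fin 2))⟫ ^ 2)
            + Real.cos (∠ A B C) * (dist A C * ⟪g, (‖C - A‖⁻¹ • (C - A) : EuclideanSpace ℝ (Fin 2))⟫ ^ 2)
            + Real.cos (∠ A C B) * (dist A B * ⟪g, (‖B - A‖⁻¹ • (B - A) : EuclideanSpace ℝ (Fin 2))⟫ ^ 2)) ∧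
    Real.sqrt (triArea A B C) * ‖g‖
        ≤ Real.sqrt (max (dist B C) (max (dist A C) (dist A B))) /
            Real.sqrt (2 * Real.sin (max (∠ B A C) (max (∠ A B C) (∠ A C B)))) *
          (Real.sqrt (dist B C) * |⟪g, (‖C - B‖⁻¹ • (C - B) : EuclideanSpace ℝ (Fin 2))⟫|
            + Real.sqrt (dist A C) * |⟪g, (‖C - A‖⁻¹ • (C - A) : EuclideanSpace ℝ (Fin 2))⟫|
            + Real.sqrt (dist A B) * |⟪g, (‖B - A‖⁻¹ • (B - A) : EuclideanSpace ℝ (Fin 2))⟫|) :=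
  stmt10_general A B C hnd RT hcirc g
end

section
/- (Control of directional components along a segment by the two long edges) Let T be a triangle with maximum angle θ_M attained at a vertex, and let e₁, e₂ be the two edges adjacent to the maximum angle, with unit tangents t₁, t₂ and angle θ between directions used in the affine map. For a right triangle (θ_M = π/2 with e₁ on the x₁-axis), for every constant vector v ∈ ℝ² and every segment e ⊆ T with unit tangent t_e, ‖v·t_e‖_{L²(e)} ≤ ‖v·t₁‖_{L²(e₁)} + ‖v·t₂‖_{L²(e₂)}; in general ‖v·t_e‖_{L²(e)} ≲ (sin θ_M)^{-1/2}(‖v·t₁‖_{L²(e₁)} + ‖v·t₂‖_{L²(e₂)}). -/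
open EuclideanGeometry Real MeasureTheory
open scoped RealInnerProductSpace

/-!
Write `q - p = a • (B - A) + b • (C - A)` with `|a|, |b| ≤ 1`. The component of `q - p`
orthogonal to `C - A` has length `|a| sin θ ‖B - A‖`, so `a² sin θ ‖B - A‖ ≤ ‖q - p‖`, and
symmetrically for `b`. Expanding `⟪v, q - p⟫ = a ⟪v, B - A⟫ + b ⟪v, C - A⟫` and dividing by
`√‖q - p‖`, each term is at most `(sin θ)^{-1/2} |⟪v, B - A⟫| / √‖B - A‖`, which is the edge
term `√|e₁| |⟪v, t₁⟫|`. Hence the general bound holds with `C = 1`, and for `θ = π/2` it is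
the right-angle bound.
-/

open InnerProductGeometry

section ConvexHull

variable {E : Type*} [AddCommGroup E] [Module ℝ E]

lemma exists_sub_eq_smul_add_smul_of_mem_convexHull {A B C p : E}
    (hp : p ∈ convexHull ℝ ({A, B, C} : Set E)) :
    ∃ s t : ℝ, 0 ≤ s ∧ 0 ≤ t ∧ s + t ≤ 1 ∧ p - A = s • (B - A) + t • (C - A) := by
  rw [← convexJoin_singleton_segment, mem_convexJoin] at hp
  obtain ⟨A', rfl, y, hy, hp⟩ := hp
  rw [segment_eq_image'] at hy hp
  obtain ⟨s, ⟨hs₀, hs₁⟩, rfl⟩ := hy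
  obtain ⟨t, ⟨ht₀, ht₁⟩, rfl⟩ := hp
  refine ⟨t * (1 - s), t * s, by nlinarith, by positivity, by nlinarith, ?_⟩
  module

lemma exists_abs_le_one_sub_eq_smul_add_smul {A B C p q : E}
    (hp : p ∈ convexHull ℝ ({A, B, C} : Set E)) (hq : q ∈ convexHull ℝ ({A, B, C} : Set E)) :
    ∃ a b : ℝ, |a| ≤ 1 ∧ |b| ≤ 1 ∧ q - p = a • (B - A) + b • (C - A) := by
  obtain ⟨s₁, s₂, hs₁, hs₂, hs, hpA⟩ := exists_sub_eq_smul_add_smul_of_mem_convexHull hp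
  obtain ⟨t₁, t₂, ht₁, ht₂, ht, hqA⟩ := exists_sub_eq_smul_add_smul_of_mem_convexHull hq
  refine ⟨t₁ - s₁, t₂ - s₂, abs_le.2 ⟨by linarith, by linarith⟩,
    abs_le.2 ⟨by linarith, by linarith⟩, ?_⟩
  rw [← sub_sub_sub_cancel_right q p A, hpA, hqA]
  module

end ConvexHull

lemma abs_mul_div_sqrt_le {a σ ℓ L : ℝ} (x : ℝ) (hσ : 0 < σ) (hℓ : 0 < ℓ)
    (h : a ^ 2 * σ * ℓ ≤ L) : |a * x| / √L ≤ (√σ)⁻¹ * (|x| / √ℓ) := by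
  have hsqrt : |a| * √(σ * ℓ) ≤ √L := by
    rw [← sqrt_sq_eq_abs, ← sqrt_mul (sq_nonneg a), ← mul_assoc]
    exact sqrt_le_sqrt h
  rcases (sqrt_nonneg L).eq_or_lt with hL | hL
  · rw [← hL, div_zero]
    positivity
  rw [sqrt_mul hσ.le] at hsqrt
  rw [abs_mul]
  have hσℓ : 0 < √σ * √ℓ := by positivity
  calc |a| * |x| / √L ≤ |x| / (√σ * √ℓ) := by
        rw [div_le_div_iff₀ hL hσℓ]
        nlinarith [mul_le_mul_of_nonneg_left hsqrt (abs_nonneg x)]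
    _ = (√σ)⁻¹ * (|x| / √ℓ) := by field_simp

section InnerProduct

variable {E : Type*} [NormedAddCommGroup E] [InnerProductSpace ℝ E]

lemma sin_angle_smul_add_smul_mul_norm (u w : E) (a b : ℝ) :
    sin (angle (a • u + b • w) w) * ‖a • u + b • w‖ = |a| * (sin (angle u w) * ‖u‖) := by
  rcases eq_or_ne w 0 with rfl | hw
  · simp [norm_smul]
  have hw' : 0 < ‖w‖ := norm_pos_iff.2 hw
  have gram : ⟪a • u + b • w, a • u + b • w⟫ * ⟪w, w⟫ - ⟪a • u + b • w, w⟫ * ⟪a • u + b • w, w⟫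
      = a ^ 2 * (⟪u, u⟫ * ⟪w, w⟫ - ⟪u, w⟫ * ⟪u, w⟫) := by
    simp only [inner_add_left, inner_add_right, real_inner_smul_left, real_inner_smul_right,
      real_inner_comm u w]
    ring
  refine mul_right_cancel₀ hw'.ne' ?_
  rw [mul_assoc, sin_angle_mul_norm_mul_norm, gram, sqrt_mul (sq_nonneg a), sqrt_sq_eq_abs,
    ← sin_angle_mul_norm_mul_norm]
  ring

lemma sq_mul_sin_angle_mul_norm_le {u w : E} {a : ℝ} (b : ℝ) (ha : |a| ≤ 1) :
    a ^ 2 * sin (angle u w) * ‖u‖ ≤ ‖a • u + b • w‖ := by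
  have h₀ : 0 ≤ |a| * (sin (angle u w) * ‖u‖) := by
    have := sin_angle_nonneg u w
    positivity
  calc a ^ 2 * sin (angle u w) * ‖u‖ = |a| * (|a| * (sin (angle u w) * ‖u‖)) := by
        rw [← sq_abs]; ring
    _ ≤ sin (angle (a • u + b • w) w) * ‖a • u + b • w‖ := by
        rw [sin_angle_smul_add_smul_mul_norm]
        exact mul_le_of_le_one_left h₀ ha
    _ ≤ ‖a • u + b • w‖ := mul_le_of_le_one_left (norm_nonneg _) (sin_le_one _)

lemma sqrt_norm_mul_abs_inner_normalize (v u : E) :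
    √‖u‖ * |⟪v, ‖u‖⁻¹ • u⟫| = |⟪v, u⟫| / √‖u‖ := by
  rw [real_inner_smul_right, abs_mul, abs_inv, abs_norm]
  rcases (norm_nonneg u).eq_or_lt with h | h
  · simp [← h]
  · have hs : 0 < √‖u‖ := sqrt_pos.2 h
    field_simp
    rw [sq_sqrt h.le]

theorem sqrt_dist_mul_abs_inner_le_of_mem_convexHull {A B C p q : E} (hT : AffineIndependent ℝ ![A, B, C])
    (hp : p ∈ convexHull ℝ ({A, B, C} : Set E)) (hq : q ∈ convexHull ℝ ({A, B, C} : Set E))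
    (v : E) :
    √(dist p q) * |⟪v, ‖q - p‖⁻¹ • (q - p)⟫|
      ≤ (√(sin (∠ B A C)))⁻¹ *
        (√(dist A B) * |⟪v, ‖B - A‖⁻¹ • (B - A)⟫| + √(dist A C) * |⟪v, ‖C - A‖⁻¹ • (C - A)⟫|) := by
  have hσ : 0 < sin (∠ B A C) := by
    refine sin_pos_of_not_collinear ?_
    rw [Set.insert_comm]
    exact affineIndependent_iff_not_collinear_set.1 hT
  have hBA : 0 < ‖B - A‖ :=
    norm_pos_iff.2 (sub_ne_zero.2 (hT.injective.ne (by decide : (1 : Fin 3) ≠ 0)))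
  have hCA : 0 < ‖C - A‖ :=
    norm_pos_iff.2 (sub_ne_zero.2 (hT.injective.ne (by decide : (2 : Fin 3) ≠ 0)))
  obtain ⟨a, b, ha, hb, hpq⟩ := exists_abs_le_one_sub_eq_smul_add_smul hp hq
  have hAB := sq_mul_sin_angle_mul_norm_le (u := B - A) (w := C - A) b ha
  have hAC := sq_mul_sin_angle_mul_norm_le (u := C - A) (w := B - A) a hb
  rw [InnerProductGeometry.angle_comm, add_comm, ← hpq] at hAC
  rw [← hpq] at hAB
  rw [dist_comm p, dist_comm A, dist_comm A, dist_eq_norm, dist_eq_norm, dist_eq_norm,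
    sqrt_norm_mul_abs_inner_normalize, sqrt_norm_mul_abs_inner_normalize,
    sqrt_norm_mul_abs_inner_normalize, hpq, inner_add_right, real_inner_smul_right,
    real_inner_smul_right, ← hpq]
  calc |a * ⟪v, B - A⟫ + b * ⟪v, C - A⟫| / √‖q - p‖
      ≤ |a * ⟪v, B - A⟫| / √‖q - p‖ + |b * ⟪v, C - A⟫| / √‖q - p‖ := by
        rw [← add_div]; gcongr; exact abs_add_le _ _
    _ ≤ (√(sin (∠ B A C)))⁻¹ * (|⟪v, B - A⟫| / √‖B - A‖)
          + (√(sin (∠ B A C)))⁻¹ * (|⟪v, C - A⟫| / √‖C - A‖) :=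
        add_le_add (abs_mul_div_sqrt_le _ hσ hBA hAB) (abs_mul_div_sqrt_le _ hσ hCA hAC)
    _ = _ := (mul_add _ _ _).symm

end InnerProduct

/-- control of directional components along a segment by the two long
edges: let `T = conv{A,B,C'}` with the maximum angle at `A` and adjacent edges
`e₁ = AB`, `e₂ = AC'` (unit tangents `t₁, t₂`).  For a right triangle (`∠ at A = π/2`),
for every constant vector `v` and segment `e = [p,q] ⊆ T` with unit tangent `t_e`,
`‖v·t_e‖_{L²(e)} ≤ ‖v·t₁‖_{L²(e₁)} + ‖v·t₂‖_{L²(e₂)}`;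
in general, with a universal constant `C`,
`‖v·t_e‖_{L²(e)} ≤ C (sin θ_M)^{-1/2} (‖v·t₁‖_{L²(e₁)} + ‖v·t₂‖_{L²(e₂)})`
(here `‖v·t‖_{L²(e)} = |e|^{1/2} |v·t|`). -/
theorem stmt12 :
    ∃ C : ℝ, 0 < C ∧
    ((∀ A B C' : EuclideanSpace ℝ (Fin 2), AffineIndependent ℝ ![A, B, C'] →
        ∠ B A C' = π / 2 →
        ∀ p q : EuclideanSpace ℝ (Fin 2),
          p ∈ convexHull ℝ ({A, B, C'} : Set (EuclideanSpace ℝ (Fin 2))) →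
          q ∈ convexHull ℝ ({A, B, C'} : Set (EuclideanSpace ℝ (Fin 2))) → p ≠ q →
        ∀ v : EuclideanSpace ℝ (Fin 2),
          Real.sqrt (dist p q) * |⟪v, (‖q - p‖⁻¹ • (q - p) : EuclideanSpace ℝ (Fin 2))⟫|
            ≤ Real.sqrt (dist A B) * |⟪v, (‖B - A‖⁻¹ • (B - A) : EuclideanSpace ℝ (Fin 2))⟫|
              + Real.sqrt (dist A C') * |⟪v, (‖C' - A‖⁻¹ • (C' - A) : EuclideanSpace ℝ (Fin 2))⟫|) ∧
      (∀ A B C' : EuclideanSpace ℝ (Fin 2), AffineIndependent ℝ ![A, B, C'] →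
        ∠ A B C' ≤ ∠ B A C' → ∠ A C' B ≤ ∠ B A C' →
        ∀ p q : EuclideanSpace ℝ (Fin 2),
          p ∈ convexHull ℝ ({A, B, C'} : Set (EuclideanSpace ℝ (Fin 2))) →
          q ∈ convexHull ℝ ({A, B, C'} : Set (EuclideanSpace ℝ (Fin 2))) → p ≠ q →
        ∀ v : EuclideanSpace ℝ (Fin 2),
          Real.sqrt (dist p q) * |⟪v, (‖q - p‖⁻¹ • (q - p) : EuclideanSpace ℝ (Fin 2))⟫|
            ≤ C * (Real.sqrt (Real.sin (∠ B A C')))⁻¹ *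
              (Real.sqrt (dist A B) * |⟪v, (‖B - A‖⁻¹ • (B - A) : EuclideanSpace ℝ (Fin 2))⟫|
                + Real.sqrt (dist A C') * |⟪v, (‖C' - A‖⁻¹ • (C' - A) : EuclideanSpace ℝ (Fin 2))⟫|))) := by
  refine ⟨1, one_pos, fun A B C' hT hright p q hp hq _ v => ?_,
    fun A B C' hT _ _ p q hp hq _ v => ?_⟩
  · simpa [hright] using sqrt_dist_mul_abs_inner_le_of_mem_convexHull hT hp hq v
  · rw [one_mul]
    exact sqrt_dist_mul_abs_inner_le_of_mem_convexHull hT hp hq v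
end

section
/- (Degenerate-direction projection bound for a prism-like element) Let K̂ ⊂ ℝ³ be a convex polyhedron with a face F̂ in the plane {x₃=0} whose vertical projection onto that plane is F̂, with supporting height l. Then for u ∈ H¹(K̂) and v = u − P⁰_{F̂}u (where P⁰_{F̂}u is the mean of the trace of u on F̂), ‖v‖_{L²(K̂)} ≤ √2 l^{1/2} ‖v‖_{L²(F̂)} + √2 l ‖∇u‖_{L²(K̂)}. -/
/-!
Write points of `K̂` as `(p, t)` with `p` in the base and `t` the height. Since `K̂` is convex
and projects onto `F̂ ⊆ {x₃ = 0}`, each nonempty vertical fibre of `K̂` is a segment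
`{p} × [0, h(p)]` with `h(p) ≤ l` starting on `F̂`. For `v = u - c` (any constant `c`, so that
`∇v = ∇u`) the fundamental theorem of calculus and Cauchy–Schwarz along the fibre give
`v(p, t)² ≤ 2 v(p, 0)² + 2 l ∫ |∂₃ v|²`; integrating over the fibre (length `≤ l`) and then over
the base (Fubini) yields `‖v‖²_{K̂} ≤ 2 l ‖v‖²_{F̂} + 2 l² ‖∇u‖²_{K̂}`. Lebesgue measure on the
base is dominated by `μH[2]` on `F̂` because the horizontal projection is `1`-Lipschitz.
-/

open MeasureTheory Set
open scoped ENNReal NNReal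

local notation "ℝ³" => EuclideanSpace ℝ (Fin 3)

theorem sq_intervalIntegral_le_mul {h : ℝ → ℝ} (hh : Continuous h) {t : ℝ} (ht : 0 ≤ t) :
    (∫ s in (0 : ℝ)..t, h s) ^ 2 ≤ t * ∫ s in (0 : ℝ)..t, h s ^ 2 := by
  set I := ∫ s in (0 : ℝ)..t, h s
  set J := ∫ s in (0 : ℝ)..t, h s ^ 2
  -- Cauchy–Schwarz from `0 ≤ ∫ (t h - I)²`.
  have hexpand : ∫ s in (0 : ℝ)..t, (t * h s - I) ^ 2 = t * (t * J - I ^ 2) := by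
    have hint : ∀ c : ℝ, IntervalIntegrable (fun s => c * h s) volume 0 t :=
      fun c => (continuous_const.mul hh).intervalIntegrable _ _
    have hint2 : IntervalIntegrable (fun s => t ^ 2 * h s ^ 2) volume 0 t :=
      (continuous_const.mul (hh.pow 2)).intervalIntegrable _ _
    calc ∫ s in (0 : ℝ)..t, (t * h s - I) ^ 2
        = ∫ s in (0 : ℝ)..t, (t ^ 2 * h s ^ 2 - (2 * t * I) * h s + I ^ 2) := by
          congr 1; funext s; ring
      _ = t ^ 2 * J - 2 * t * I * I + t * I ^ 2 := by
          rw [intervalIntegral.integral_add (hint2.sub (hint _)) intervalIntegrable_const,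
            intervalIntegral.integral_sub hint2 (hint _), intervalIntegral.integral_const_mul,
            intervalIntegral.integral_const_mul, intervalIntegral.integral_const]
          simp only [sub_zero, smul_eq_mul]; rfl
      _ = t * (t * J - I ^ 2) := by ring
  have hnonneg : 0 ≤ t * (t * J - I ^ 2) :=
    hexpand ▸ intervalIntegral.integral_nonneg ht fun s _ => sq_nonneg _
  rcases ht.eq_or_lt with rfl | htpos
  · simp [I]
  · nlinarith [(mul_nonneg_iff_of_pos_left htpos).mp hnonneg]

section Segment

variable {T : Set ℝ} {l : ℝ} {f f' : ℝ → ℝ}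

theorem sq_le_two_mul_sq_add_of_hasDerivAt (hTl : T ⊆ Icc 0 l) (hT : ∀ t ∈ T, Icc 0 t ⊆ T)
    (hf : ∀ s, HasDerivAt f (f' s) s) (hf' : Continuous f') {t : ℝ} (ht : t ∈ T) :
    f t ^ 2 ≤ 2 * f 0 ^ 2 + 2 * l * ∫ s in T, f' s ^ 2 := by
  obtain ⟨ht0, htl⟩ := hTl ht
  have hftc : f t = f 0 + ∫ s in (0 : ℝ)..t, f' s := by
    rw [intervalIntegral.integral_eq_sub_of_hasDerivAt (fun s _ => hf s)
      (hf'.intervalIntegrable _ _)]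
    ring
  have hJ : ∫ s in (0 : ℝ)..t, f' s ^ 2 ≤ ∫ s in T, f' s ^ 2 := by
    rw [intervalIntegral.integral_of_le ht0]
    exact setIntegral_mono_set (((hf'.pow 2).integrableOn_Icc).mono_set hTl)
      (Filter.Eventually.of_forall fun s => sq_nonneg _)
      (Ioc_subset_Icc_self.trans (hT t ht)).eventuallyLE
  have hJ0 : 0 ≤ ∫ s in (0 : ℝ)..t, f' s ^ 2 :=
    intervalIntegral.integral_nonneg ht0 fun s _ => sq_nonneg _
  have hCS : (∫ s in (0 : ℝ)..t, f' s) ^ 2 ≤ l * ∫ s in T, f' s ^ 2 :=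
    (sq_intervalIntegral_le_mul hf' ht0).trans (mul_le_mul htl hJ hJ0 (ht0.trans htl))
  rw [hftc]
  nlinarith [sq_nonneg (f 0 - ∫ s in (0 : ℝ)..t, f' s)]

theorem setIntegral_sq_le_of_hasDerivAt (hTl : T ⊆ Icc 0 l) (hT : ∀ t ∈ T, Icc 0 t ⊆ T)
    (h0 : 0 ∈ T) (hf : ∀ s, HasDerivAt f (f' s) s) (hf' : Continuous f') :
    ∫ t in T, f t ^ 2 ≤ 2 * l * f 0 ^ 2 + 2 * l ^ 2 * ∫ t in T, f' t ^ 2 := by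
  have hl : 0 ≤ l := (hTl h0).2
  have hfc : Continuous f := continuous_iff_continuousAt.mpr fun s => (hf s).continuousAt
  have hTm : MeasurableSet T :=
    OrdConnected.measurableSet ⟨fun a ha b hb x hx => hT b hb ⟨(hTl ha).1.trans hx.1, hx.2⟩⟩
  have hvol : volume.real T ≤ l := by
    simpa [hl] using measureReal_mono (μ := volume) hTl (by simp)
  calc ∫ t in T, f t ^ 2 ≤ ∫ _ in T, (2 * f 0 ^ 2 + 2 * l * ∫ s in T, f' s ^ 2) :=
        setIntegral_mono_on (((hfc.pow 2).integrableOn_Icc).mono_set hTl)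
          (integrableOn_const (measure_ne_top_of_subset hTl (by simp))) hTm
          fun t ht => sq_le_two_mul_sq_add_of_hasDerivAt hTl hT hf hf' ht
    _ = volume.real T * (2 * f 0 ^ 2 + 2 * l * ∫ s in T, f' s ^ 2) := by
        rw [setIntegral_const, smul_eq_mul]
    _ ≤ l * (2 * f 0 ^ 2 + 2 * l * ∫ s in T, f' s ^ 2) := by gcongr
    _ = 2 * l * f 0 ^ 2 + 2 * l ^ 2 * ∫ t in T, f' t ^ 2 := by ring

end Segment

section Slices

variable {α β E : Type*} [MeasurableSpace α] [MeasurableSpace β] [NormedAddCommGroup E]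
  [NormedSpace ℝ E] {μ : Measure α} {ν : Measure β} {Q : Set (α × β)} {g : α × β → E}

theorem setIntegral_slice_eq_integral_indicator (hQ : MeasurableSet Q) (b : β) :
    ∫ a in (fun a => (a, b)) ⁻¹' Q, g (a, b) ∂μ = ∫ a, Q.indicator g (a, b) ∂μ := by
  rw [← integral_indicator (measurable_prodMk_right hQ)]
  rfl

variable [SFinite μ] [SFinite ν]

theorem setIntegral_prod_eq_integral_setIntegral_slice (hQ : MeasurableSet Q)
    (hg : IntegrableOn g Q (μ.prod ν)) :
    ∫ p in Q, g p ∂(μ.prod ν) = ∫ b, (∫ a in (fun a => (a, b)) ⁻¹' Q, g (a, b) ∂μ) ∂ν := by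
  simp_rw [setIntegral_slice_eq_integral_indicator hQ]
  rw [← integral_prod_symm _ ((integrable_indicator_iff hQ).mpr hg), integral_indicator hQ]

theorem integrable_setIntegral_slice (hQ : MeasurableSet Q)
    (hg : IntegrableOn g Q (μ.prod ν)) :
    Integrable (fun b => ∫ a in (fun a => (a, b)) ⁻¹' Q, g (a, b) ∂μ) ν := by
  simp_rw [setIntegral_slice_eq_integral_indicator hQ]
  exact ((integrable_indicator_iff hQ).mpr hg).integral_prod_right

end Slices

theorem setIntegral_sq_le_of_vertical_segments {P : Type*} [TopologicalSpace P]
    [SecondCountableTopology P] [T2Space P] [MeasurableSpace P] [BorelSpace P] (ν : Measure P)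
    [SFinite ν] [IsFiniteMeasureOnCompacts ν] {Q : Set (ℝ × P)} (hQ : IsCompact Q) {l : ℝ}
    (hQl : ∀ p ∈ Q, p.1 ∈ Icc 0 l) (hQseg : ∀ p ∈ Q, ∀ s ∈ Icc 0 p.1, (s, p.2) ∈ Q)
    {w w' : ℝ × P → ℝ} (hw : Continuous w) (hw' : Continuous w')
    (hderiv : ∀ t q, HasDerivAt (fun s => w (s, q)) (w' (t, q)) t) :
    ∫ p in Q, w p ^ 2 ∂(volume.prod ν)
      ≤ 2 * l * ∫ q in (fun q => ((0 : ℝ), q)) ⁻¹' Q, w (0, q) ^ 2 ∂ν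
        + 2 * l ^ 2 * ∫ p in Q, w' p ^ 2 ∂(volume.prod ν) := by
  set D := (fun q => ((0 : ℝ), q)) ⁻¹' Q
  have hQm : MeasurableSet Q := hQ.isClosed.measurableSet
  have hDm : MeasurableSet D := measurable_prodMk_left hQm
  have hDint : Integrable (D.indicator fun q => w (0, q) ^ 2) ν :=
    (integrable_indicator_iff hDm).mpr <|
      (((hw.comp (Continuous.prodMk_right 0)).pow 2).continuousOn.integrableOn_compact
        (hQ.image continuous_snd)).mono_set fun q hq => ⟨(0, q), hq, rfl⟩
  have hsqint : ∀ g : ℝ × P → ℝ, Continuous g → IntegrableOn (fun p => g p ^ 2) Q (volume.prod ν) :=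
    fun g hg => (hg.pow 2).continuousOn.integrableOn_compact hQ
  have hw'int := integrable_setIntegral_slice hQm (hsqint w' hw')
  have hslice : ∀ q, ∫ t in (fun t => (t, q)) ⁻¹' Q, w (t, q) ^ 2
      ≤ 2 * l * D.indicator (fun q => w (0, q) ^ 2) q
        + 2 * l ^ 2 * ∫ t in (fun t => (t, q)) ⁻¹' Q, w' (t, q) ^ 2 := by
    intro q
    by_cases hq : q ∈ D
    · rw [indicator_of_mem hq]
      exact setIntegral_sq_le_of_hasDerivAt (fun t ht => hQl _ ht)
        (fun t ht => hQseg _ ht) hq (hderiv · q) (hw'.comp (Continuous.prodMk_left q))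
    · have hempty : (fun t => (t, q)) ⁻¹' Q = ∅ :=
        eq_empty_of_forall_notMem fun t ht => hq (hQseg _ ht 0 ⟨le_rfl, (hQl _ ht).1⟩)
      simp [hempty, indicator_of_notMem hq]
  calc ∫ p in Q, w p ^ 2 ∂(volume.prod ν)
      = ∫ q, (∫ t in (fun t => (t, q)) ⁻¹' Q, w (t, q) ^ 2) ∂ν :=
        setIntegral_prod_eq_integral_setIntegral_slice hQm (hsqint w hw)
    _ ≤ ∫ q, (2 * l * D.indicator (fun q => w (0, q) ^ 2) q
        + 2 * l ^ 2 * ∫ t in (fun t => (t, q)) ⁻¹' Q, w' (t, q) ^ 2) ∂ν :=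
        integral_mono_of_nonneg
          (Filter.Eventually.of_forall fun q => integral_nonneg fun t => sq_nonneg _)
          ((hDint.const_mul _).add (hw'int.const_mul _)) (Filter.Eventually.of_forall hslice)
    _ = _ := by
        rw [integral_add (hDint.const_mul _) (hw'int.const_mul _), integral_const_mul,
          integral_const_mul, integral_indicator hDm,
          setIntegral_prod_eq_integral_setIntegral_slice hQm (hsqint w' hw')]

theorem LipschitzWith.hausdorffMeasure_restrict_image_le_map {X Y : Type*} [EMetricSpace X]
    [MeasurableSpace X] [BorelSpace X] [EMetricSpace Y] [MeasurableSpace Y] [BorelSpace Y]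
    {K : ℝ≥0} {f : X → Y} (hf : LipschitzWith K f) {d : ℝ} (hd : 0 ≤ d) (S : Set X) :
    (μH[d] : Measure Y).restrict (f '' S) ≤ ((K : ℝ≥0∞) ^ d) • (μH[d].restrict S).map f := by
  refine Measure.le_iff.mpr fun B hB => ?_
  rw [Measure.restrict_apply hB, Measure.smul_apply,
    Measure.map_apply hf.continuous.measurable hB,
    Measure.restrict_apply (hf.continuous.measurable hB), smul_eq_mul, inter_comm B,
    inter_comm (f ⁻¹' B), ← image_inter_preimage]
  exact hf.hausdorffMeasure_image_le hd _

/-- `vertSplit x = (x 2, ![x 0, x 1])`: the height and the horizontal coordinates. -/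
noncomputable def vertSplit : ℝ³ ≃ᵐ ℝ × (Fin 2 → ℝ) :=
  (MeasurableEquiv.toLp 2 (Fin 3 → ℝ)).symm.trans
    (MeasurableEquiv.piFinSuccAbove (fun _ => ℝ) 2)

namespace vertSplit

theorem measurePreserving : MeasurePreserving vertSplit volume (volume.prod volume) :=
  (EuclideanSpace.volume_preserving_symm_measurableEquiv_toLp (Fin 3)).trans
    (volume_preserving_piFinSuccAbove (fun _ : Fin 3 => ℝ) 2)

theorem symm_apply (t : ℝ) (q : Fin 2 → ℝ) :
    vertSplit.symm (t, q) = WithLp.toLp 2 (Fin.insertNth 2 t q) := rfl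

theorem continuous : Continuous vertSplit :=
  ((continuous_apply 2).comp (PiLp.continuous_ofLp 2 _)).prodMk
    (continuous_pi fun _ => (continuous_apply _).comp (PiLp.continuous_ofLp 2 _))

theorem continuous_symm : Continuous vertSplit.symm := by
  have h : Continuous fun p : ℝ × (Fin 2 → ℝ) => (Fin.insertNth 2 p.1 p.2 : Fin 3 → ℝ) :=
    Continuous.finInsertNth (A := fun _ : Fin 3 => ℝ) 2 continuous_fst continuous_snd
  exact (PiLp.continuous_toLp 2 _).comp h

theorem symm_apply_two (t : ℝ) (q : Fin 2 → ℝ) : vertSplit.symm (t, q) 2 = t := by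
  simp [symm_apply]

theorem symm_apply_succAbove (t : ℝ) (q : Fin 2 → ℝ) (i : Fin 2) :
    vertSplit.symm (t, q) (Fin.succAbove 2 i) = q i := by
  simp [symm_apply]

theorem symm_eq_add (t : ℝ) (q : Fin 2 → ℝ) :
    vertSplit.symm (t, q) = vertSplit.symm (0, q) + t • EuclideanSpace.single 2 1 := by
  ext i
  induction i using Fin.succAboveCases 2 <;>
    simp [symm_apply_two, symm_apply_succAbove, Fin.succAbove_ne]

theorem eq_symm_zero {x y : ℝ³} (h0 : y 0 = x 0) (h1 : y 1 = x 1) (h2 : y 2 = 0) :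
    y = vertSplit.symm (0, (vertSplit x).2) := by
  ext i
  fin_cases i
  · exact h0
  · exact h1
  · exact h2

theorem lipschitzWith_snd : LipschitzWith 1 fun x => (vertSplit x).2 :=
  LipschitzWith.of_dist_le_mul fun x y => by
    rw [NNReal.coe_one, one_mul, dist_pi_le_iff dist_nonneg]
    exact fun i => PiLp.dist_apply_le x y _

theorem setIntegral_symm_preimage (h : ℝ³ → ℝ) (K : Set ℝ³) :
    ∫ p in vertSplit.symm ⁻¹' K, h (vertSplit.symm p) ∂(volume.prod volume) = ∫ x in K, h x :=
  (measurePreserving.symm _).setIntegral_preimage_emb vertSplit.symm.measurableEmbedding h K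

theorem hasDerivAt_comp_symm {v : ℝ³ → ℝ} (hv : Differentiable ℝ v) (t : ℝ) (q : Fin 2 → ℝ) :
    HasDerivAt (fun s => v (vertSplit.symm (s, q)))
      (fderiv ℝ v (vertSplit.symm (t, q)) (EuclideanSpace.single 2 1)) t := by
  have hline : (fun s => v (vertSplit.symm (s, q)))
      = fun s => v (vertSplit.symm (0, q) + s • EuclideanSpace.single 2 1) :=
    funext fun s => by rw [symm_eq_add s q]
  rw [hline, symm_eq_add t q]
  exact (hv _).hasFDerivAt.comp_hasDerivAt t
    (by simpa using ((hasDerivAt_id t).smul_const _).const_add (vertSplit.symm (0, q)))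

theorem _root_.Convex.vertSplit_symm_mem {K : Set ℝ³} (hK : Convex ℝ K) {t s : ℝ}
    {q : Fin 2 → ℝ} (h0 : vertSplit.symm (0, q) ∈ K) (ht : vertSplit.symm (t, q) ∈ K)
    (hs : s ∈ Icc 0 t) : vertSplit.symm (s, q) ∈ K := by
  rw [symm_eq_add] at ht ⊢
  rcases hs.1.eq_or_lt with rfl | hs0
  · simpa using h0
  · have htpos : 0 < t := hs0.trans_le hs.2
    have := hK.add_smul_mem h0 ht (t := s / t) ⟨by positivity, (div_le_one htpos).mpr hs.2⟩
    rwa [smul_smul, div_mul_cancel₀ s htpos.ne'] at this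

end vertSplit

theorem setIntegral_vertSplit_face_le {F : Set ℝ³} (hFm : MeasurableSet F)
    (hF : ∀ y ∈ F, y 2 = 0) {g : ℝ³ → ℝ} (hg : Continuous g) (hg0 : 0 ≤ g)
    (hgF : IntegrableOn g F μH[2]) :
    ∫ q in (fun q => vertSplit.symm (0, q)) ⁻¹' F, g (vertSplit.symm (0, q))
      ≤ ∫ y in F, g y ∂μH[2] := by
  set π : ℝ³ → Fin 2 → ℝ := fun x => (vertSplit x).2
  have hπ : Measurable π := vertSplit.lipschitzWith_snd.continuous.measurable
  have hsymm : ∀ y ∈ F, vertSplit.symm (0, π y) = y := fun y hy =>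
    (vertSplit.eq_symm_zero rfl rfl (hF y hy)).symm
  have himage : (fun q => vertSplit.symm (0, q)) ⁻¹' F = π '' F := by
    ext q
    refine ⟨fun hq => ⟨_, hq, ?_⟩, ?_⟩
    · simp [π]
    · rintro ⟨y, hy, rfl⟩
      simpa [hsymm y hy] using hy
  have hle := vertSplit.lipschitzWith_snd.hausdorffMeasure_restrict_image_le_map
    (by norm_num : (0 : ℝ) ≤ 2) F
  rw [ENNReal.coe_one, ENNReal.one_rpow, one_smul,
    show (2 : ℝ) = Fintype.card (Fin 2) by simp, hausdorffMeasure_pi_real] at hle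
  have hgπ : Integrable (fun q => g (vertSplit.symm (0, q))) ((μH[2].restrict F).map π) := by
    rw [integrable_map_measure _ hπ.aemeasurable]
    · exact hgF.congr_fun (fun y hy => by simp [hsymm y hy]) hFm
    · exact (hg.comp (vertSplit.continuous_symm.comp (Continuous.prodMk_right 0)))
        |>.aestronglyMeasurable
  rw [himage]
  calc _ ≤ ∫ q, g (vertSplit.symm (0, q)) ∂((μH[2].restrict F).map π) :=
        integral_mono_measure hle (Filter.Eventually.of_forall fun q => hg0 _) hgπ
    _ = ∫ y in F, g y ∂μH[2] := by
        rw [integral_map hπ.aemeasurable hgπ.aestronglyMeasurable]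
        exact setIntegral_congr_fun hFm fun y hy => by simp [hsymm y hy]

theorem setIntegral_sq_le_face_add_fderiv {K F : Set ℝ³} (hK : Convex ℝ K) (hKc : IsCompact K)
    (hFK : F ⊆ K) (hF : ∀ y ∈ F, y 2 = 0) (hFfin : μH[2] F ≠ ∞) {l : ℝ} (hl : 0 ≤ l)
    (hheight : ∀ x ∈ K, 0 ≤ x 2 ∧ x 2 ≤ l) (hproj : ∀ x ∈ K, ∃ y ∈ F, y 0 = x 0 ∧ y 1 = x 1)
    {v : ℝ³ → ℝ} (hv : ContDiff ℝ 1 v) :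
    ∫ x in K, v x ^ 2
      ≤ 2 * l * ∫ y in F, v y ^ 2 ∂μH[2] + 2 * l ^ 2 * ∫ x in K, ‖fderiv ℝ v x‖ ^ 2 := by
  set Q := vertSplit.symm ⁻¹' K with hQ
  have hQc : IsCompact Q := by
    rw [hQ, ← vertSplit.image_eq_preimage_symm]
    exact hKc.image vertSplit.continuous
  have hbase : ∀ x ∈ K, vertSplit.symm (0, (vertSplit x).2) ∈ F := fun x hx => by
    obtain ⟨y, hy, h0, h1⟩ := hproj x hx
    rwa [← vertSplit.eq_symm_zero h0 h1 (hF y hy)]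
  have hFm : MeasurableSet F := by
    have hF_eq : F = K ∩ {x | x 2 = 0} := subset_antisymm (fun y hy => ⟨hFK hy, hF y hy⟩)
      fun x ⟨hx, hx2⟩ => by simpa [← vertSplit.eq_symm_zero rfl rfl hx2] using hbase x hx
    rw [hF_eq]
    exact (hKc.isClosed.inter
      (isClosed_eq (PiLp.continuous_apply 2 _ 2) continuous_const)).measurableSet
  have hQl : ∀ p ∈ Q, p.1 ∈ Icc 0 l := fun ⟨t, q⟩ hp => by
    simpa [vertSplit.symm_apply_two] using hheight _ hp
  have hQseg : ∀ p ∈ Q, ∀ s ∈ Icc 0 p.1, (s, p.2) ∈ Q := fun ⟨_, q⟩ hp _ hs =>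
    hK.vertSplit_symm_mem (hFK (by simpa using hbase _ hp)) hp hs
  have hDv : Continuous fun x => fderiv ℝ v x := hv.continuous_fderiv one_ne_zero
  have hDve : Continuous fun p => fderiv ℝ v (vertSplit.symm p) (EuclideanSpace.single 2 1) :=
    (hDv.comp vertSplit.continuous_symm).clm_apply continuous_const
  have hmain := setIntegral_sq_le_of_vertical_segments volume hQc hQl hQseg
    (hv.continuous.comp vertSplit.continuous_symm) hDve
    (vertSplit.hasDerivAt_comp_symm (hv.differentiable one_ne_zero))
  have hface : ∫ q in (fun q => ((0 : ℝ), q)) ⁻¹' Q, v (vertSplit.symm (0, q)) ^ 2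
      ≤ ∫ y in F, v y ^ 2 ∂μH[2] := by
    have hD : (fun q => ((0 : ℝ), q)) ⁻¹' Q = (fun q => vertSplit.symm (0, q)) ⁻¹' F :=
      ext fun q => ⟨fun h => by simpa using hbase _ h, fun h => hFK h⟩
    obtain ⟨C, hC⟩ := hKc.exists_bound_of_continuousOn (hv.continuous.pow 2).continuousOn
    rw [hD]
    exact setIntegral_vertSplit_face_le hFm hF (hv.continuous.pow 2) (fun _ => sq_nonneg _)
      (Measure.integrableOn_of_bounded hFfin (hv.continuous.pow 2).aestronglyMeasurable
        ((ae_restrict_iff' hFm).mpr (Filter.Eventually.of_forall fun y hy => hC y (hFK hy))))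
  have hgrad : ∫ p in Q, (fderiv ℝ v (vertSplit.symm p) (EuclideanSpace.single 2 1)) ^ 2
      ∂(volume.prod volume) ≤ ∫ x in K, ‖fderiv ℝ v x‖ ^ 2 := by
    rw [← vertSplit.setIntegral_symm_preimage]
    refine setIntegral_mono_on ((hDve.pow 2).continuousOn.integrableOn_compact hQc)
      (((hDv.comp vertSplit.continuous_symm).norm.pow 2).continuousOn.integrableOn_compact hQc)
      hQc.isClosed.measurableSet fun p _ => ?_
    have hle := (fderiv ℝ v (vertSplit.symm p)).le_opNorm (EuclideanSpace.single 2 1)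
    rw [PiLp.norm_single, norm_one, mul_one] at hle
    rw [← sq_abs, ← Real.norm_eq_abs]
    exact pow_le_pow_left₀ (norm_nonneg _) hle 2
  rw [← vertSplit.setIntegral_symm_preimage]
  exact hmain.trans (add_le_add (mul_le_mul_of_nonneg_left hface (by positivity))
    (mul_le_mul_of_nonneg_left hgrad (by positivity)))

theorem sqrt_le_of_le_two_mul_add {A B C l : ℝ} (hl : 0 ≤ l) (hB : 0 ≤ B) (hC : 0 ≤ C)
    (h : A ≤ 2 * l * B + 2 * l ^ 2 * C) : √A ≤ √2 * √l * √B + √2 * l * √C := by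
  have hsq : (√2 * √l * √B) ^ 2 = 2 * l * B := by
    rw [mul_pow, mul_pow, Real.sq_sqrt zero_le_two, Real.sq_sqrt hl, Real.sq_sqrt hB]
  have hsq' : (√2 * l * √C) ^ 2 = 2 * l ^ 2 * C := by
    rw [mul_pow, mul_pow, Real.sq_sqrt zero_le_two, Real.sq_sqrt hC]
  rw [Real.sqrt_le_iff]
  refine ⟨by positivity, h.trans ?_⟩
  nlinarith [mul_nonneg (by positivity : 0 ≤ √2 * √l * √B) (by positivity : 0 ≤ √2 * l * √C)]

theorem stmt15_general
    (Khat : Set (EuclideanSpace ℝ (Fin 3)))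
    (hKconv : Convex ℝ Khat) (hKcomp : IsCompact Khat)
    (Fhat : Set (EuclideanSpace ℝ (Fin 3)))
    (hFK : Fhat ⊆ Khat)
    (hFplane : ∀ y ∈ Fhat, y 2 = 0)
    (hFarea : 0 < (μH[2] Fhat).toReal)
    (l : ℝ) (hl : 0 ≤ l)
    (hheight : ∀ x ∈ Khat, 0 ≤ x 2 ∧ x 2 ≤ l)
    (hproj : ∀ x ∈ Khat, ∃ y ∈ Fhat, y 0 = x 0 ∧ y 1 = x 1)
    (u : EuclideanSpace ℝ (Fin 3) → ℝ)
    (hu : ContDiff ℝ 1 u) :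
    Real.sqrt (∫ x in Khat,
        (u x - ((μH[2] Fhat).toReal)⁻¹ * (∫ y in Fhat, u y ∂(μH[2]))) ^ 2)
      ≤ Real.sqrt 2 * Real.sqrt l *
          Real.sqrt (∫ y in Fhat,
            (u y - ((μH[2] Fhat).toReal)⁻¹ * (∫ z in Fhat, u z ∂(μH[2]))) ^ 2 ∂(μH[2]))
        + Real.sqrt 2 * l * Real.sqrt (∫ x in Khat, ‖fderiv ℝ u x‖ ^ 2) := by
  set c := ((μH[2] Fhat).toReal)⁻¹ * ∫ y in Fhat, u y ∂μH[2]
  have hFfin : μH[2] Fhat ≠ ∞ := fun h => by simp [h] at hFarea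
  have key := setIntegral_sq_le_face_add_fderiv hKconv hKcomp hFK hFplane hFfin hl hheight hproj
    (hu.sub (contDiff_const (c := c)))
  simp only [fderiv_sub_const] at key
  exact sqrt_le_of_le_two_mul_add hl (integral_nonneg fun _ => sq_nonneg _)
    (integral_nonneg fun _ => by positivity) key

/-- degenerate-direction projection bound for a prism-like element:
let `K̂ ⊆ ℝ³` be a convex polyhedron with a face `F̂` in the plane `{x₃ = 0}` equal to
the vertical projection of `K̂`, with supporting height `l`.  Then for `u ∈ H¹(K̂)`
(represented by a `C¹` function) and `v = u − P⁰_{F̂} u` (the mean over `F̂` taken with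
respect to the surface measure `μH[2]`),
`‖v‖_{L²(K̂)} ≤ √2 l^{1/2} ‖v‖_{L²(F̂)} + √2 l ‖∇u‖_{L²(K̂)}`. -/
theorem stmt15
    (Khat : Set (EuclideanSpace ℝ (Fin 3)))
    (hKconv : Convex ℝ Khat) (hKcomp : IsCompact Khat) (hKne : (interior Khat).Nonempty)
    (Fhat : Set (EuclideanSpace ℝ (Fin 3)))
    (hFK : Fhat ⊆ Khat)
    (hFplane : ∀ y ∈ Fhat, y 2 = 0)
    (hFarea : 0 < (μH[2] Fhat).toReal)
    (l : ℝ) (hl : 0 ≤ l)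
    (hheight : ∀ x ∈ Khat, 0 ≤ x 2 ∧ x 2 ≤ l)
    (hproj : ∀ x ∈ Khat, ∃ y ∈ Fhat, y 0 = x 0 ∧ y 1 = x 1)
    (u : EuclideanSpace ℝ (Fin 3) → ℝ)
    (hu : ContDiff ℝ 1 u) :
    Real.sqrt (∫ x in Khat,
        (u x - ((μH[2] Fhat).toReal)⁻¹ * (∫ y in Fhat, u y ∂(μH[2]))) ^ 2)
      ≤ Real.sqrt 2 * Real.sqrt l *
          Real.sqrt (∫ y in Fhat,
            (u y - ((μH[2] Fhat).toReal)⁻¹ * (∫ z in Fhat, u z ∂(μH[2]))) ^ 2 ∂(μH[2]))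
        + Real.sqrt 2 * l * Real.sqrt (∫ x in Khat, ‖fderiv ℝ u x‖ ^ 2) :=
  stmt15_general Khat hKconv hKcomp Fhat hFK hFplane hFarea l hl hheight hproj u hu
end

section
/- (Structure of the linear IFE space) Let K ⊂ ℝ³ be split by a plane Γ_h^K (with unit normal n̄ and orthonormal tangents t̄¹, t̄²) into K⁻ and K⁺, and let β⁻, β⁺ > 0. Define M⁻ = [t̄¹, t̄², β⁻ n̄]^{-T} [t̄¹, t̄², β⁺ n̄]^T. Then a piecewise-affine function v with v|_{K±} ∈ P₁(K±) satisfies [v] = 0 and [β ∇v · n̄] = 0 across Γ_h^K if and only if v(x) = p_h · (x − x_K) + c, where x_K ∈ Γ_h^K, c ∈ ℝ, and the piecewise-constant vector p_h satisfies p_h|_{K⁻} = M⁻ p_h|_{K⁺}. In particular ∇v⁻ = M⁻ ∇v⁺ and M⁺ := (M⁻)^{-1} exists. -/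
open scoped RealInnerProductSpace Matrix

/-!
Write the frame conditions in coordinates. Continuity of `v` across the plane means that the two
affine pieces agree at `xK` and have the same tangential derivatives `⟪tⁱ, ∇v±⟫`; the flux condition
is `β⁻ ⟪n, ∇v⁻⟫ = β⁺ ⟪n, ∇v⁺⟫`. The two tangential and the flux equations together say exactly
`A⁻ ∇v⁻ = A⁺ ∇v⁺` for the matrices `A±` with rows `t¹, t², β± n`; these rows are orthogonal and
nonzero, so `A±` are invertible and the system is `∇v⁻ = (A⁻)⁻¹ A⁺ ∇v⁺ = M⁻ ∇v⁺`.
-/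

section Rows

variable {ι : Type*} [Fintype ι]

theorem mulVec_of_rows (v : ι → EuclideanSpace ℝ ι) (g : EuclideanSpace ℝ ι) :
    (Matrix.of fun i j => v i j) *ᵥ (fun j => g j) = fun i => ⟪v i, g⟫ := by
  ext i
  simp [Matrix.mulVec, dotProduct, PiLp.inner_apply, mul_comm]

theorem isUnit_of_linearIndependent_rows [DecidableEq ι] {v : ι → EuclideanSpace ℝ ι}
    (hv : LinearIndependent ℝ v) :
    IsUnit (Matrix.of fun i j => v i j) := by
  rw [← Matrix.linearIndependent_rows_iff_isUnit]
  exact hv.map' _ (WithLp.linearEquiv 2 ℝ (ι → ℝ)).ker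

end Rows

theorem Matrix.eq_inv_mul_mulVec_iff {n α : Type*} [Fintype n] [DecidableEq n] [CommRing α]
    {A B : Matrix n n α} (hA : IsUnit A) (u v : n → α) :
    u = (A⁻¹ * B) *ᵥ v ↔ A *ᵥ u = B *ᵥ v := by
  have hdet := (Matrix.isUnit_iff_isUnit_det A).mp hA
  rw [← Matrix.mulVec_mulVec]
  constructor
  · rintro rfl
    rw [Matrix.mulVec_mulVec, Matrix.mul_nonsing_inv _ hdet, Matrix.one_mulVec]
  · intro h
    rw [← h, Matrix.mulVec_mulVec, Matrix.nonsing_inv_mul _ hdet, Matrix.one_mulVec]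

theorem Orthonormal.linearIndependent_smul {ι 𝕜 E : Type*} [RCLike 𝕜] [NormedAddCommGroup E]
    [InnerProductSpace 𝕜 E] {v : ι → E} (hv : Orthonormal 𝕜 v) {c : ι → 𝕜} (hc : ∀ i, c i ≠ 0) :
    LinearIndependent 𝕜 fun i => c i • v i :=
  linearIndependent_of_ne_zero_of_inner_eq_zero (fun i => smul_ne_zero (hc i) (hv.ne_zero i))
    fun i j hij => by simp [inner_smul_left, inner_smul_right, hv.inner_eq_zero hij]

theorem OrthonormalBasis.inner_eq_zero_of_inner_eq_zero_of_ne {ι E : Type*} [Fintype ι]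
    [NormedAddCommGroup E] [InnerProductSpace ℝ E] (b : OrthonormalBasis ι ℝ E) {k : ι} {g w : E}
    (hg : ∀ i ≠ k, ⟪b i, g⟫ = 0) (hw : ⟪b k, w⟫ = 0) : ⟪g, w⟫ = 0 := by
  rw [← b.sum_inner_mul_inner g w]
  refine Finset.sum_eq_zero fun i _ => ?_
  by_cases hik : i = k
  · rw [hik, hw, mul_zero]
  · rw [real_inner_comm, hg i hik, zero_mul]

section Frame

variable {E : Type*} [NormedAddCommGroup E] [InnerProductSpace ℝ E] {t1 t2 n : E}

theorem orthonormal_frame (h1 : ‖t1‖ = 1) (h2 : ‖t2‖ = 1) (hn : ‖n‖ = 1)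
    (h12 : ⟪t1, t2⟫ = 0) (h1n : ⟪t1, n⟫ = 0) (h2n : ⟪t2, n⟫ = 0) :
    Orthonormal ℝ ![t1, t2, n] := by
  rw [orthonormal_iff_ite]
  intro i j
  fin_cases i <;> fin_cases j <;>
    simp [real_inner_comm, h1, h2, hn, h12, h1n, h2n]

theorem linearIndependent_frame_smul (hon : Orthonormal ℝ ![t1, t2, n]) {β : ℝ} (hβ : β ≠ 0) :
    LinearIndependent ℝ ![t1, t2, β • n] := by
  have hscale : ![t1, t2, β • n] = fun i => ![1, 1, β] i • ![t1, t2, n] i := by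
    ext i : 1
    fin_cases i <;> simp
  rw [hscale]
  exact hon.linearIndependent_smul (by simp [Fin.forall_fin_succ, hβ])

theorem forall_orthogonal_inner_eq_iff (hon : Orthonormal ℝ ![t1, t2, n])
    (hE : Module.finrank ℝ E = 3) {gm gp : E} :
    (∀ w, ⟪n, w⟫ = 0 → ⟪gm, w⟫ = ⟪gp, w⟫) ↔ ⟪t1, gm⟫ = ⟪t1, gp⟫ ∧ ⟪t2, gm⟫ = ⟪t2, gp⟫ := by
  have htn : ⟪n, t1⟫ = 0 ∧ ⟪n, t2⟫ = 0 :=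
    ⟨by simpa using hon.inner_eq_zero (i := 2) (j := 0) (by decide),
      by simpa using hon.inner_eq_zero (i := 2) (j := 1) (by decide)⟩
  constructor
  · intro h
    rw [real_inner_comm gm, real_inner_comm gp, real_inner_comm gm, real_inner_comm gp]
    exact ⟨h t1 htn.1, h t2 htn.2⟩
  · rintro ⟨h1, h2⟩ w hw
    let b := (basisOfOrthonormalOfCardEqFinrank hon (by simp [hE])).toOrthonormalBasis
      (by simpa using hon)
    have hb : ⇑b = ![t1, t2, n] := by simp [b]
    rw [← sub_eq_zero, ← inner_sub_left]
    refine b.inner_eq_zero_of_inner_eq_zero_of_ne (k := 2) (fun i hi => ?_) (by simpa [hb] using hw)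
    fin_cases i <;> simp_all [inner_sub_right]

end Frame

section Affine

variable {E : Type*} [NormedAddCommGroup E] [InnerProductSpace ℝ E]

theorem affine_eq_on_hyperplane_iff {n x₀ gm gp : E} {cm cp : ℝ} :
    (∀ x, ⟪n, x - x₀⟫ = 0 → ⟪gm, x⟫ + cm = ⟪gp, x⟫ + cp) ↔
      ⟪gm, x₀⟫ + cm = ⟪gp, x₀⟫ + cp ∧ ∀ w, ⟪n, w⟫ = 0 → ⟪gm, w⟫ = ⟪gp, w⟫ := by
  constructor
  · intro h
    have h₀ := h x₀ (by simp)
    refine ⟨h₀, fun w hw => ?_⟩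
    have hw' := h (x₀ + w) (by simpa using hw)
    rw [inner_add_right, inner_add_right] at hw'
    linarith
  · rintro ⟨h₀, h⟩ x hx
    have := h _ hx
    rw [inner_sub_right, inner_sub_right] at this
    linarith

theorem affine_eq_shift_iff {g x₀ : E} {c c₀ : ℝ} :
    (∀ x, ⟪g, x⟫ + c = ⟪g, x - x₀⟫ + c₀) ↔ c₀ = ⟪g, x₀⟫ + c := by
  simp only [inner_sub_right]
  exact ⟨fun h => by linarith [h 0], fun h x => by linarith⟩

end Affine

/-- structure of the linear IFE space: let `K ⊆ ℝ³` be split by the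
plane through `xK` with orthonormal frame `(t1, t2, n)` (normal `n`), coefficients
`β⁻, β⁺ > 0`, and `M⁻ = [t1, t2, β⁻ n]^{-T} [t1, t2, β⁺ n]^T`.  A piecewise affine
function with pieces `v± x = ⟪g±, x⟫ + c±` satisfies the jump conditions
`[v] = 0` across the plane and `[β ∇v · n] = 0` if and only if there are `c₀` and a
piecewise gradient with `∇v⁻ = M⁻ ∇v⁺` such that `v± x = ⟪g±, x − xK⟫ + c₀`.
Moreover `M⁻` is invertible (so `M⁺ = (M⁻)⁻¹` exists). -/
theorem stmt18
    (t1 t2 n : EuclideanSpace ℝ (Fin 3))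
    (h1 : ‖t1‖ = 1) (h2 : ‖t2‖ = 1) (hn : ‖n‖ = 1)
    (h12 : ⟪t1, t2⟫ = 0) (h1n : ⟪t1, n⟫ = 0) (h2n : ⟪t2, n⟫ = 0)
    (βm βp : ℝ) (hβm : 0 < βm) (hβp : 0 < βp)
    (xK : EuclideanSpace ℝ (Fin 3))
    (Mm : Matrix (Fin 3) (Fin 3) ℝ)
    (hMm : Mm = (Matrix.of fun i j => (![t1, t2, βm • n] i : EuclideanSpace ℝ (Fin 3)) j)⁻¹ *
                (Matrix.of fun i j => (![t1, t2, βp • n] i : EuclideanSpace ℝ (Fin 3)) j))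
    (gm gp : EuclideanSpace ℝ (Fin 3)) (cm cp : ℝ) :
    IsUnit Mm ∧
    (((∀ x : EuclideanSpace ℝ (Fin 3), ⟪n, x - xK⟫ = 0 → ⟪gm, x⟫ + cm = ⟪gp, x⟫ + cp) ∧
        βm * ⟪gm, n⟫ = βp * ⟪gp, n⟫)
      ↔ (∃ c0 : ℝ,
          (fun i => gm i) = Mm.mulVec (fun i => gp i) ∧
          (∀ x : EuclideanSpace ℝ (Fin 3), ⟪gm, x⟫ + cm = ⟪gm, x - xK⟫ + c0) ∧
          (∀ x : EuclideanSpace ℝ (Fin 3), ⟪gp, x⟫ + cp = ⟪gp, x - xK⟫ + c0))) := by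
  have hon := orthonormal_frame h1 h2 hn h12 h1n h2n
  have hAm := isUnit_of_linearIndependent_rows (linearIndependent_frame_smul hon hβm.ne')
  have hAp := isUnit_of_linearIndependent_rows (linearIndependent_frame_smul hon hβp.ne')
  subst hMm
  refine ⟨(Matrix.isUnit_nonsing_inv_iff.mpr hAm).mul hAp, ?_⟩
  rw [affine_eq_on_hyperplane_iff,
    forall_orthogonal_inner_eq_iff hon finrank_euclideanSpace_fin,
    Matrix.eq_inv_mul_mulVec_iff hAm, mulVec_of_rows, mulVec_of_rows]
  simp only [funext_iff, Fin.forall_fin_succ, Fin.isValue, Matrix.cons_val_zero,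
    Matrix.cons_val_succ, IsEmpty.forall_iff, inner_smul_left, RCLike.conj_to_real,
    real_inner_comm n, affine_eq_shift_iff, exists_and_left, exists_eq_left]
  tauto
end
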